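/- arXiv:1510.03575 — 12 statements merged into one kernel-verified Lean document; each statement's English description precedes it below -/
import Mathlib

section
/- A bid b > 0 is a pure Nash equilibrium, i.e. b is a minimizer of a ↦ c(a;b) over a ∈ [0,∞), if and only if b = b^e = CρW₀/(1−ρ); moreover the resulting equilibrium cost is c(b^e;b^e) = C(1+ρ)W₀/(1−ρ). -/
/-- Expected waiting time `W(a; b)` of a tagged customer bidding `a` when all
other customers bid `b`, in the homogeneous accumulating-priority M/G/1 queue
with utilization `ρ` and mean residual service time `W0`. -/
noncomputable def waitW (ρ W0 b a : ℝ) : ℝ :=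
  if a ≤ b then W0 / (1 - ρ) * b / ((1 - ρ) * b + ρ * a)
  else W0 / (1 - ρ) * ((1 - ρ) * a + ρ * b) / a

/-- Cost `c(a;b) = C·W(a;b) + a` of a tagged customer bidding `a` against crowd bid `b`. -/
noncomputable def costC (ρ W0 C b a : ℝ) : ℝ := C * waitW ρ W0 b a + a

/-- The equilibrium bid `b^e = CρW₀/(1-ρ)`. -/
noncomputable def eqBid (ρ W0 C : ℝ) : ℝ := C * ρ * W0 / (1 - ρ)

/-! Writing `b^e = eqBid ρ W0 C`, the gain from deviating from the crowd bid `b` to `a` is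
`(b - a)(b^e / ((1-ρ)b + ρa) - 1)` below `b` and `(a - b)(1 - b^e / a)` above it.
When `b = b^e` both factors are nonnegative; when `b < b^e` a bid between `b` and `b^e` is
strictly cheaper, and when `b > b^e` the bid `max 0 b^e` is. -/

section Deviation

variable {ρ W0 C b a : ℝ}

lemma waitW_self (hb : b ≠ 0) : waitW ρ W0 b b = W0 / (1 - ρ) := by
  rw [waitW, if_pos le_rfl, show (1 - ρ) * b + ρ * b = b by ring, mul_div_assoc,
    div_self hb, mul_one]

lemma costC_self (hb : b ≠ 0) : costC ρ W0 C b b = C * W0 / (1 - ρ) + b := by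
  rw [costC, waitW_self hb, mul_div_assoc]

lemma costC_sub_costC_self_of_le (hρ : ρ ≠ 1) (hb : b ≠ 0)
    (hD : (1 - ρ) * b + ρ * a ≠ 0) (hab : a ≤ b) :
    costC ρ W0 C b a - costC ρ W0 C b b
      = (b - a) * (eqBid ρ W0 C / ((1 - ρ) * b + ρ * a) - 1) := by
  have h1 : 1 - ρ ≠ 0 := sub_ne_zero.2 (Ne.symm hρ)
  rw [costC_self hb, costC, waitW, if_pos hab, eqBid]
  field_simp
  ring

lemma costC_sub_costC_self_of_lt (hρ : ρ ≠ 1) (hb : b ≠ 0) (ha : a ≠ 0) (hab : b < a) :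
    costC ρ W0 C b a - costC ρ W0 C b b = (a - b) * (1 - eqBid ρ W0 C / a) := by
  have h1 : 1 - ρ ≠ 0 := sub_ne_zero.2 (Ne.symm hρ)
  rw [costC_self hb, costC, waitW, if_neg hab.not_ge, eqBid]
  field_simp
  ring

lemma costC_self_le_costC_of_eq_eqBid (hρ0 : 0 ≤ ρ) (hρ1 : ρ < 1) (hb : 0 < b)
    (he : b = eqBid ρ W0 C) (ha : 0 ≤ a) : costC ρ W0 C b b ≤ costC ρ W0 C b a := by
  rw [← sub_nonneg]
  rcases le_or_gt a b with hab | hba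
  · have hD : 0 < (1 - ρ) * b + ρ * a := by nlinarith
    rw [costC_sub_costC_self_of_le hρ1.ne hb.ne' hD.ne' hab, ← he]
    refine mul_nonneg (sub_nonneg.2 hab) (sub_nonneg.2 ((one_le_div hD).2 ?_))
    nlinarith
  · have ha : 0 < a := hb.trans hba
    rw [costC_sub_costC_self_of_lt hρ1.ne hb.ne' ha.ne' hba, ← he]
    exact mul_nonneg (sub_nonneg.2 hba.le) (sub_nonneg.2 ((div_le_one ha).2 hba.le))

lemma exists_costC_lt_costC_self_of_lt_eqBid (hρ1 : ρ < 1) (hb : 0 < b)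
    (h : b < eqBid ρ W0 C) : ∃ a, 0 ≤ a ∧ costC ρ W0 C b a < costC ρ W0 C b b := by
  set e := eqBid ρ W0 C
  have hba : b < (b + e) / 2 := by linarith
  have hae : (b + e) / 2 < e := by linarith
  have ha : 0 < (b + e) / 2 := hb.trans hba
  refine ⟨(b + e) / 2, ha.le, sub_neg.1 ?_⟩
  rw [costC_sub_costC_self_of_lt hρ1.ne hb.ne' ha.ne' hba]
  exact mul_neg_of_pos_of_neg (sub_pos.2 hba) (sub_neg.2 ((one_lt_div ha).2 hae))

lemma exists_costC_lt_costC_self_of_eqBid_lt (hρ0 : 0 ≤ ρ) (hρ1 : ρ < 1) (hb : 0 < b)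
    (h : eqBid ρ W0 C < b) : ∃ a, 0 ≤ a ∧ costC ρ W0 C b a < costC ρ W0 C b b := by
  set e := eqBid ρ W0 C
  set a := max 0 e
  have hab : a < b := max_lt hb h
  have hD₀ : 0 < (1 - ρ) * b + ρ * a := by
    have : 0 ≤ ρ * a := mul_nonneg hρ0 (le_max_left 0 e)
    nlinarith
  have hDe : e < (1 - ρ) * b + ρ * a := by
    have : ρ * e ≤ ρ * a := mul_le_mul_of_nonneg_left (le_max_right 0 e) hρ0
    nlinarith
  refine ⟨a, le_max_left 0 e, sub_neg.1 ?_⟩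
  rw [costC_sub_costC_self_of_le hρ1.ne hb.ne' hD₀.ne' hab.le]
  exact mul_neg_of_pos_of_neg (sub_pos.2 hab) (sub_neg.2 ((div_lt_one hD₀).2 hDe))

end Deviation

/-- A bid `b > 0` is a pure Nash equilibrium (a minimizer of `a ↦ c(a;b)` over
`[0,∞)`) iff `b = b^e = CρW₀/(1-ρ)`; moreover the equilibrium cost is
`c(b^e;b^e) = C(1+ρ)W₀/(1-ρ)`. -/
theorem nash_equilibrium_homogeneous (ρ W0 C : ℝ) (hρ0 : 0 < ρ) (hρ1 : ρ < 1)
    (hW0 : 0 < W0) (hC : 0 < C) (b : ℝ) (hb : 0 < b) :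
    ((∀ a : ℝ, 0 ≤ a → costC ρ W0 C b b ≤ costC ρ W0 C b a) ↔ b = eqBid ρ W0 C) ∧
    costC ρ W0 C (eqBid ρ W0 C) (eqBid ρ W0 C) = C * (1 + ρ) * W0 / (1 - ρ) := by
  refine ⟨⟨fun hmin => ?_, fun he _ => ?_⟩, ?_⟩
  · by_contra hne
    obtain ⟨a, ha, hlt⟩ := (lt_or_gt_of_ne hne).elim
      (exists_costC_lt_costC_self_of_lt_eqBid hρ1 hb)
      (exists_costC_lt_costC_self_of_eqBid_lt hρ0.le hρ1 hb)
    exact (hmin a ha).not_gt hlt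
  · exact costC_self_le_costC_of_eq_eqBid hρ0.le hρ1 hb he
  · have he : eqBid ρ W0 C ≠ 0 := by
      unfold eqBid
      have : 0 < 1 - ρ := sub_pos.2 hρ1
      positivity
    rw [costC_self he, eqBid]
    ring
end

section
/- Suppose ρ ≤ 1/2, and for b > 0 let r(b) denote the unique minimizer of a ↦ c(a;b) over [0,∞). Then r is monotone increasing on the interval (0, b^e) (follow-the-crowd behaviour) and monotone decreasing on the interval (b^e, b^e/(1−ρ)²) (avoid-the-crowd behaviour). -/
noncomputable def reducedCost (ρ K b a : ℝ) : ℝ :=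
  if a ≤ b then K * b / ((1 - ρ) * b + ρ * a) + a
  else K * (1 - ρ) + (K * ρ * b / a + a)

lemma costC_eq_reducedCost {ρ W0 C b : ℝ} (hb : 0 ≤ b) :
    costC ρ W0 C b = reducedCost ρ (C * W0 / (1 - ρ)) b := by
  funext a
  unfold costC waitW reducedCost
  split_ifs with hab
  · ring
  · have ha : a ≠ 0 := by linarith [not_le.1 hab]
    field_simp
    ring

lemma two_mul_le_sq_div_add (s : ℝ) {x : ℝ} (hx : 0 < x) : 2 * s ≤ s ^ 2 / x + x := by
  have h : s ^ 2 / x + x - 2 * s = (x - s) ^ 2 / x := by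
    field_simp
    ring
  linarith [div_nonneg (sq_nonneg (x - s)) hx.le]

section reducedCost

variable {ρ K b a : ℝ}

lemma mul_reducedCost_of_le (hab : a ≤ b) :
    ρ * reducedCost ρ K b a = K * ρ * b / ((1 - ρ) * b + ρ * a) + ((1 - ρ) * b + ρ * a)
      - (1 - ρ) * b := by
  rw [reducedCost, if_pos hab]
  ring

lemma reducedCost_of_lt (hab : b < a) :
    reducedCost ρ K b a = K * (1 - ρ) + (K * ρ * b / a + a) :=
  if_neg (not_le.2 hab)

lemma reducedCost_self (hb : b ≠ 0) : reducedCost ρ K b b = K + b := by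
  rw [reducedCost, if_pos le_rfl]
  field_simp
  ring

lemma reducedCost_self_le_of_le (hρ0 : 0 ≤ ρ) (hρ1 : ρ < 1) (hb : 0 < b) (hbK : b ≤ K * ρ)
    (ha : 0 ≤ a) (hab : a ≤ b) : reducedCost ρ K b b ≤ reducedCost ρ K b a := by
  have hD : 0 < (1 - ρ) * b + ρ * a := by nlinarith
  have hDK : (1 - ρ) * b + ρ * a ≤ K * ρ := by nlinarith
  have hdiff : reducedCost ρ K b a - (K + b) =
      (b - a) * (K * ρ - ((1 - ρ) * b + ρ * a)) / ((1 - ρ) * b + ρ * a) := by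
    rw [reducedCost, if_pos hab, eq_div_iff hD.ne', sub_mul, add_mul, div_mul_cancel₀ _ hD.ne']
    ring
  rw [reducedCost_self hb.ne']
  linarith [div_nonneg (mul_nonneg (sub_nonneg.2 hab) (sub_nonneg.2 hDK)) hD.le]

lemma reducedCost_self_le_of_lt (hb : 0 < b) (hbK : K * ρ ≤ b) (hab : b < a) :
    reducedCost ρ K b b ≤ reducedCost ρ K b a := by
  have ha : 0 < a := hb.trans hab
  have hdiff : reducedCost ρ K b a - (K + b) = (a - b) * (a - K * ρ) / a := by
    rw [reducedCost_of_lt hab]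
    field_simp
    ring
  rw [reducedCost_self hb.ne']
  linarith [div_nonneg (mul_nonneg (sub_nonneg.2 hab.le) (by linarith : 0 ≤ a - K * ρ)) ha.le]

theorem isMinOn_reducedCost_of_lt (hρ0 : 0 < ρ) (hρ1 : ρ < 1) (hb : 0 < b) (hbK : b < K * ρ) :
    IsMinOn (reducedCost ρ K b) (Set.Ici 0) √(K * ρ * b) := by
  set s := √(K * ρ * b)
  have hs2 : s ^ 2 = K * ρ * b := Real.sq_sqrt (by nlinarith)
  have hbs : b < s := lt_of_pow_lt_pow_left₀ 2 (Real.sqrt_nonneg _) (by nlinarith)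
  have hmin : reducedCost ρ K b s = K * (1 - ρ) + 2 * s := by
    rw [reducedCost_of_lt hbs, ← hs2]
    field_simp
    ring
  refine isMinOn_iff.2 fun a ha => ?_
  rcases le_or_gt a b with hab | hab
  · calc reducedCost ρ K b s ≤ K + b := by
          rw [hmin]
          have := two_mul_le_sq_div_add s hb
          rw [hs2, mul_div_assoc, div_self hb.ne'] at this
          linarith
      _ = reducedCost ρ K b b := (reducedCost_self hb.ne').symm
      _ ≤ reducedCost ρ K b a := reducedCost_self_le_of_le hρ0.le hρ1 hb hbK.le ha hab
  · rw [hmin, reducedCost_of_lt hab, ← hs2]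
    linarith [two_mul_le_sq_div_add s (hb.trans hab)]

/-- The minimizer is the bid with `(1 - ρ) b + ρ a = √(K ρ b)`, where AM-GM is tight on the
branch `a ≤ b`. -/
theorem isMinOn_reducedCost_of_lt_of_lt (hρ0 : 0 < ρ) (hρ1 : ρ < 1) (hbK : K * ρ < b)
    (hbK' : b < K * ρ / (1 - ρ) ^ 2) :
    0 ≤ (√(K * ρ * b) - (1 - ρ) * b) / ρ ∧
      IsMinOn (reducedCost ρ K b) (Set.Ici 0) ((√(K * ρ * b) - (1 - ρ) * b) / ρ) := by
  have hbK' : (1 - ρ) ^ 2 * b < K * ρ := by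
    rwa [lt_div_iff₀ (by nlinarith), mul_comm] at hbK'
  have hb : 0 < b := by nlinarith [mul_pos hρ0 (by linarith : 0 < 2 - ρ)]
  have hKρ : 0 < K * ρ := lt_of_le_of_lt (by positivity) hbK'
  set s := √(K * ρ * b)
  have hs2 : s ^ 2 = K * ρ * b := Real.sq_sqrt (by positivity)
  have hsb : s < b := lt_of_pow_lt_pow_left₀ 2 hb.le (by nlinarith)
  have hbs : (1 - ρ) * b < s := lt_of_pow_lt_pow_left₀ 2 (Real.sqrt_nonneg _) (by nlinarith)
  have hs : 0 < s := lt_of_le_of_lt (by nlinarith) hbs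
  set a₀ := (s - (1 - ρ) * b) / ρ
  have ha₀ : 0 ≤ a₀ := div_nonneg (by linarith) hρ0.le
  have ha₀b : a₀ ≤ b := by rw [div_le_iff₀ hρ0]; linarith
  have hD₀ : (1 - ρ) * b + ρ * a₀ = s := by
    simp only [a₀]
    field_simp
    ring
  have hmin : ρ * reducedCost ρ K b a₀ = 2 * s - (1 - ρ) * b := by
    rw [mul_reducedCost_of_le ha₀b, hD₀, ← hs2, pow_two, mul_div_assoc,
      div_self hs.ne']
    ring
  have lower : ∀ a, 0 ≤ a → a ≤ b → reducedCost ρ K b a₀ ≤ reducedCost ρ K b a := by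
    intro a ha hab
    refine le_of_mul_le_mul_left ?_ hρ0
    rw [hmin, mul_reducedCost_of_le hab, ← hs2]
    linarith [two_mul_le_sq_div_add s (by nlinarith : 0 < (1 - ρ) * b + ρ * a)]
  refine ⟨ha₀, isMinOn_iff.2 fun a ha => ?_⟩
  rcases le_or_gt a b with hab | hab
  · exact lower a ha hab
  · exact (lower b hb.le le_rfl).trans (reducedCost_self_le_of_lt hb hbK.le hab)

end reducedCost

lemma antitoneOn_sqrt_mul_sub_mul {c m : ℝ} (hc : 0 ≤ c) (hm : 1 / 2 ≤ m) :
    AntitoneOn (fun x => √(c * x) - m * x) (Set.Ici c) := by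
  intro x hx y hy hxy
  simp only [Real.sqrt_mul hc]
  have hu2 : √x ^ 2 = x := Real.sq_sqrt (hc.trans hx)
  have hv2 : √y ^ 2 = y := Real.sq_sqrt (hc.trans hy)
  have hcu : √c ≤ √x := Real.sqrt_le_sqrt hx
  have huv : √x ≤ √y := Real.sqrt_le_sqrt hxy
  have hfac : 0 ≤ m * (√x + √y) - √c := by nlinarith [Real.sqrt_nonneg c]
  nlinarith [mul_nonneg (sub_nonneg.2 huv) hfac]

/-- If `ρ ≤ 1/2` and `r b` is, for each `b > 0`, the unique minimizer of
`a ↦ c(a;b)` over `[0,∞)`, then `r` is monotone increasing (FTC) on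
`(0, b^e)` and monotone decreasing (ATC) on `(b^e, b^e/(1-ρ)²)`. -/
theorem best_response_FTC_ATC_low_rho (ρ W0 C : ℝ) (hρ0 : 0 < ρ) (hρ1 : ρ < 1)
    (hW0 : 0 < W0) (hC : 0 < C) (hρhalf : ρ ≤ 1 / 2) (r : ℝ → ℝ)
    (hr : ∀ b : ℝ, 0 < b →
      0 ≤ r b ∧ (∀ a : ℝ, 0 ≤ a → costC ρ W0 C b (r b) ≤ costC ρ W0 C b a) ∧
      (∀ a : ℝ, 0 ≤ a → (∀ a' : ℝ, 0 ≤ a' → costC ρ W0 C b a ≤ costC ρ W0 C b a') →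
        a = r b)) :
    MonotoneOn r (Set.Ioo 0 (eqBid ρ W0 C)) ∧
    AntitoneOn r (Set.Ioo (eqBid ρ W0 C) (eqBid ρ W0 C / (1 - ρ) ^ 2)) := by
  set K := C * W0 / (1 - ρ) with hK_def
  have hKρ : 0 < K * ρ := by
    have : 0 < 1 - ρ := by linarith
    positivity
  have hE : eqBid ρ W0 C = K * ρ := by
    rw [eqBid, hK_def]
    ring
  have r_eq : ∀ b, 0 < b → ∀ x, 0 ≤ x → IsMinOn (reducedCost ρ K b) (Set.Ici 0) x → r b = x := by
    intro b hb x hx hmin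
    refine ((hr b hb).2.2 x hx fun a ha => ?_).symm
    rw [costC_eq_reducedCost hb.le]
    exact isMinOn_iff.1 hmin a ha
  rw [hE]
  constructor
  · have hmono : MonotoneOn (fun b => √(K * ρ * b)) (Set.Ioo 0 (K * ρ)) :=
      fun x _ y _ hxy => Real.sqrt_le_sqrt (by gcongr)
    refine hmono.congr fun b hb => ?_
    exact (r_eq b hb.1 _ (Real.sqrt_nonneg _) (isMinOn_reducedCost_of_lt hρ0 hρ1 hb.1 hb.2)).symm
  · have hanti := (antitoneOn_sqrt_mul_sub_mul hKρ.le (by linarith : 1 / 2 ≤ 1 - ρ)).mono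
      (fun x (hx : x ∈ Set.Ioo (K * ρ) (K * ρ / (1 - ρ) ^ 2)) => hx.1.le)
    refine AntitoneOn.congr (fun x hx y hy hxy => div_le_div_of_nonneg_right (hanti hx hy hxy)
      hρ0.le) fun b hb => ?_
    obtain ⟨hnonneg, hmin⟩ := isMinOn_reducedCost_of_lt_of_lt hρ0 hρ1 hb.1 hb.2
    exact (r_eq b (hKρ.trans hb.1) _ hnonneg hmin).symm
end

section
/- For every strictly ordered bid profile 0 < b_1 < b_2 < ⋯ < b_N and every i = 1,…,N, the denominator in the recursion satisfies 1 − Σ_{k=i}^{N} ρ_k(1 − b_i/b_k) ≥ 1 − ρ > 0 (so the recursion is well defined), and the recursively defined waiting times satisfy W_i > 0 for every i. -/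
/-- Class expected waiting times `W_i` in the accumulating-priority M/G/1 queue
with class loads `ρ`, strictly ordered bid profile `b` and mean residual
service time `W0`, defined by Kleinrock's recursion
`W_i = (W₀/(1−ρ) − Σ_{k<i} ρ_k(1 − b_k/b_i)W_k) / (1 − Σ_{k≥i} ρ_k(1 − b_i/b_k))`. -/
noncomputable def classW {N : ℕ} (ρ b : Fin N → ℝ) (W0 : ℝ) : Fin N → ℝ
  | i =>
    (W0 / (1 - ∑ k, ρ k)
      - ∑ k : Fin N, if h : k < i then ρ k * (1 - b k / b i) * classW ρ b W0 k else 0)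
    / (1 - ∑ k : Fin N, if i ≤ k then ρ k * (1 - b i / b k) else 0)
  termination_by i => i.val
  decreasing_by exact h

private lemma sum_lt_succ_AP {N n : ℕ} (h : n < N) (f : Fin N → ℝ) :
    ∑ k : Fin N, (if (k : ℕ) < n + 1 then f k else 0)
      = (∑ k : Fin N, if (k : ℕ) < n then f k else 0) + f ⟨n, h⟩ := by
  have key : ∀ k : Fin N, (if (k : ℕ) < n + 1 then f k else 0)
      = (if (k : ℕ) < n then f k else 0) + (if k = ⟨n, h⟩ then f k else 0) := by
    intro k
    by_cases hk : k = ⟨n, h⟩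
    · subst hk; simp
    · have hk' : (k : ℕ) ≠ n := fun hh => hk (Fin.ext hh)
      by_cases h1 : (k : ℕ) < n
      · rw [if_pos (by omega), if_pos h1, if_neg hk, add_zero]
      · rw [if_neg (by omega), if_neg h1, if_neg hk, add_zero]
  rw [Finset.sum_congr rfl (fun k _ => key k), Finset.sum_add_distrib,
    Finset.sum_ite_eq' Finset.univ _ f, if_pos (Finset.mem_univ _)]

private lemma sum_ge_succ_AP {N n : ℕ} (h : n < N) (f : Fin N → ℝ) :
    ∑ k : Fin N, (if n ≤ (k : ℕ) then f k else 0)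
      = (∑ k : Fin N, if n + 1 ≤ (k : ℕ) then f k else 0) + f ⟨n, h⟩ := by
  have key : ∀ k : Fin N, (if n ≤ (k : ℕ) then f k else 0)
      = (if n + 1 ≤ (k : ℕ) then f k else 0) + (if k = ⟨n, h⟩ then f k else 0) := by
    intro k
    by_cases hk : k = ⟨n, h⟩
    · subst hk; simp
    · have hk' : (k : ℕ) ≠ n := fun hh => hk (Fin.ext hh)
      by_cases h1 : n ≤ (k : ℕ)
      · rw [if_pos h1, if_pos (by omega), if_neg hk, add_zero]
      · rw [if_neg h1, if_neg (by omega), if_neg hk, add_zero]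
  rw [Finset.sum_congr rfl (fun k _ => key k), Finset.sum_add_distrib,
    Finset.sum_ite_eq' Finset.univ _ f, if_pos (Finset.mem_univ _)]

private lemma key_AP (N : ℕ) (ρ b : Fin N → ℝ) (W0 : ℝ)
    (hρ : ∀ k, 0 < ρ k) (hρsum : ∑ k, ρ k < 1) (hW0 : 0 < W0)
    (hbpos : ∀ k, 0 < b k) :
    ∀ n : ℕ,
      (∀ k : Fin N, (k : ℕ) < n → 0 < classW ρ b W0 k) ∧
      (∑ k : Fin N, (if (k : ℕ) < n then ρ k * classW ρ b W0 k else 0))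
          * (1 - ∑ k : Fin N, (if n ≤ (k : ℕ) then ρ k else 0))
        + (∑ k : Fin N, (if n ≤ (k : ℕ) then ρ k / b k else 0))
          * (∑ k : Fin N, (if (k : ℕ) < n then ρ k * b k * classW ρ b W0 k else 0))
        = (∑ k : Fin N, (if (k : ℕ) < n then ρ k else 0)) * (W0 / (1 - ∑ k, ρ k)) := by
  set W := classW ρ b W0 with hW
  set C := W0 / (1 - ∑ k, ρ k) with hCdef
  have hρtot : (0:ℝ) < 1 - ∑ k, ρ k := by linarith
  have hC : 0 < C := div_pos hW0 hρtot
  intro n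
  induction n with
  | zero =>
    constructor
    · intro k hk; omega
    · simp
  | succ n ih =>
    obtain ⟨hpos, hJ⟩ := ih
    by_cases h : n < N
    · set i : Fin N := ⟨n, h⟩ with hi
      have hival : (i : ℕ) = n := rfl
      set A := ∑ k : Fin N, (if (k : ℕ) < n then ρ k * W k else 0) with hA
      set B := ∑ k : Fin N, (if (k : ℕ) < n then ρ k * b k * W k else 0) with hB
      set R := ∑ k : Fin N, (if n ≤ (k : ℕ) then ρ k else 0) with hR
      set T := ∑ k : Fin N, (if n ≤ (k : ℕ) then ρ k / b k else 0) with hT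
      set P := ∑ k : Fin N, (if (k : ℕ) < n then ρ k else 0) with hP
      have hbi : b i ≠ 0 := ne_of_gt (hbpos i)
      have hAnn : 0 ≤ A := by
        apply Finset.sum_nonneg; intro k _
        by_cases hk : (k : ℕ) < n
        · rw [if_pos hk]; exact le_of_lt (mul_pos (hρ k) (hpos k hk))
        · rw [if_neg hk]
      have hBnn : 0 ≤ B := by
        apply Finset.sum_nonneg; intro k _
        by_cases hk : (k : ℕ) < n
        · rw [if_pos hk]
          exact le_of_lt (mul_pos (mul_pos (hρ k) (hbpos k)) (hpos k hk))
        · rw [if_neg hk]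
      have hTnn : 0 ≤ T := by
        apply Finset.sum_nonneg; intro k _
        by_cases hk : n ≤ (k : ℕ)
        · rw [if_pos hk]; exact le_of_lt (div_pos (hρ k) (hbpos k))
        · rw [if_neg hk]
      have hPnn : 0 ≤ P := by
        apply Finset.sum_nonneg; intro k _
        by_cases hk : (k : ℕ) < n
        · rw [if_pos hk]; exact le_of_lt (hρ k)
        · rw [if_neg hk]
      have hPR : P + R = ∑ k, ρ k := by
        rw [hP, hR, ← Finset.sum_add_distrib]
        apply Finset.sum_congr rfl; intro k _
        by_cases hk : (k : ℕ) < n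
        · rw [if_pos hk, if_neg (by omega), add_zero]
        · rw [if_neg hk, if_pos (by omega), zero_add]
      have hRlt : R < 1 := by linarith
      have hnum : (∑ k : Fin N, if k < i then ρ k * (1 - b k / b i) * W k else 0)
          = A - B / b i := by
        have key : ∀ k : Fin N, (if k < i then ρ k * (1 - b k / b i) * W k else 0)
            = (if (k : ℕ) < n then ρ k * W k else 0)
              - (if (k : ℕ) < n then ρ k * b k * W k else 0) / b i := by
          intro k
          have hik : (k < i) ↔ ((k : ℕ) < n) := Iff.rfl
          by_cases hk : (k : ℕ) < n
          · rw [if_pos (hik.mpr hk), if_pos hk, if_pos hk]; ring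
          · rw [if_neg (fun hh => hk (hik.mp hh)), if_neg hk, if_neg hk]
            rw [zero_div, sub_zero]
        rw [Finset.sum_congr rfl (fun k _ => key k), Finset.sum_sub_distrib,
          ← Finset.sum_div, ← hA, ← hB]
      have hden : (∑ k : Fin N, if i ≤ k then ρ k * (1 - b i / b k) else 0)
          = R - b i * T := by
        have key : ∀ k : Fin N, (if i ≤ k then ρ k * (1 - b i / b k) else 0)
            = (if n ≤ (k : ℕ) then ρ k else 0)
              - b i * (if n ≤ (k : ℕ) then ρ k / b k else 0) := by
          intro k
          have hik : (i ≤ k) ↔ (n ≤ (k : ℕ)) := Iff.rfl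
          by_cases hk : n ≤ (k : ℕ)
          · rw [if_pos (hik.mpr hk), if_pos hk, if_pos hk]; ring
          · rw [if_neg (fun hh => hk (hik.mp hh)), if_neg hk, if_neg hk]
            rw [mul_zero, sub_zero]
        rw [Finset.sum_congr rfl (fun k _ => key k), Finset.sum_sub_distrib,
          ← Finset.mul_sum, ← hR, ← hT]
      have hDpos : 0 < 1 - (R - b i * T) := by
        have : 0 ≤ b i * T := mul_nonneg (le_of_lt (hbpos i)) hTnn
        linarith
      have hWi_eq : W i = (C - (A - B / b i)) / (1 - (R - b i * T)) := by
        rw [hW]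
        rw [classW]
        simp only [dite_eq_ite]
        rw [← hW, hnum, hden, ← hCdef]
      have hAltC : A < C := by
        have h1 : A * (1 - R) ≤ P * C := by
          nlinarith [mul_nonneg hTnn hBnn]
        have h2 : P < 1 - R := by linarith
        nlinarith [mul_lt_mul_of_pos_right h2 hC]
      have hnumpos : 0 < C - (A - B / b i) := by
        have : 0 ≤ B / b i := div_nonneg hBnn (le_of_lt (hbpos i))
        linarith
      have hWipos : 0 < W i := by
        rw [hWi_eq]; exact div_pos hnumpos hDpos
      have hEq : W i * (1 - (R - b i * T)) = C - (A - B / b i) := by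
        rw [hWi_eq, div_mul_cancel₀ _ (ne_of_gt hDpos)]
      constructor
      · intro k hk
        by_cases hkn : (k : ℕ) < n
        · exact hpos k hkn
        · have : k = i := Fin.ext (by omega)
          rw [this]; exact hWipos
      · rw [sum_lt_succ_AP h (fun k => ρ k * W k),
          sum_lt_succ_AP h (fun k => ρ k * b k * W k),
          sum_lt_succ_AP h (fun k => ρ k)]
        rw [← hA, ← hB, ← hP, ← hi]
        have hRR : (∑ k : Fin N, if n + 1 ≤ (k : ℕ) then ρ k else 0) = R - ρ i := by
          rw [hR, sum_ge_succ_AP h (fun k => ρ k), ← hi]; ring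
        have hTT : (∑ k : Fin N, if n + 1 ≤ (k : ℕ) then ρ k / b k else 0)
            = T - ρ i / b i := by
          rw [hT, sum_ge_succ_AP h (fun k => ρ k / b k), ← hi]; ring
        rw [hRR, hTT]
        have hdd : b i / b i = 1 := div_self hbi
        linear_combination hJ + ρ i * hEq - (ρ i)^2 * W i * hdd
    · have e1 : ∀ (f : Fin N → ℝ),
          ∑ k : Fin N, (if (k : ℕ) < n + 1 then f k else 0)
            = ∑ k : Fin N, (if (k : ℕ) < n then f k else 0) := by
        intro f; apply Finset.sum_congr rfl; intro k _
        have := k.isLt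
        rw [if_pos (by omega), if_pos (by omega)]
      have e2 : ∀ (f : Fin N → ℝ),
          ∑ k : Fin N, (if n + 1 ≤ (k : ℕ) then f k else 0)
            = ∑ k : Fin N, (if n ≤ (k : ℕ) then f k else 0) := by
        intro f; apply Finset.sum_congr rfl; intro k _
        have := k.isLt
        rw [if_neg (by omega), if_neg (by omega)]
      refine ⟨fun k hk => hpos k (by have := k.isLt; omega), ?_⟩
      rw [e1, e1, e1, e2, e2]
      exact hJ

/-- For every strictly ordered positive bid profile, the denominator of the
recursion is at least `1 − ρ > 0`, and all class waiting times are positive. -/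
theorem classW_denominator_and_positivity (N : ℕ) (hN : 1 ≤ N)
    (ρ b : Fin N → ℝ) (W0 : ℝ)
    (hρ : ∀ k, 0 < ρ k) (hρsum : ∑ k, ρ k < 1) (hW0 : 0 < W0)
    (hbpos : ∀ k, 0 < b k) (hbmono : StrictMono b) :
    (∀ i : Fin N,
      1 - ∑ k, ρ k ≤ 1 - ∑ k : Fin N, (if i ≤ k then ρ k * (1 - b i / b k) else 0)) ∧
    0 < 1 - ∑ k, ρ k ∧
    (∀ i : Fin N, 0 < classW ρ b W0 i) := by
  refine ⟨?_, by linarith, ?_⟩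
  · intro i
    have h1 : (∑ k : Fin N, if i ≤ k then ρ k * (1 - b i / b k) else 0) ≤ ∑ k, ρ k := by
      apply Finset.sum_le_sum
      intro k _
      by_cases hk : i ≤ k
      · rw [if_pos hk]
        have h2 : 0 < b i / b k := div_pos (hbpos i) (hbpos k)
        nlinarith [hρ k]
      · rw [if_neg hk]; exact le_of_lt (hρ k)
    linarith
  · intro i
    exact (key_AP N ρ b W0 hρ hρsum hW0 hbpos (i.val + 1)).1 i (Nat.lt_succ_self _)
end

section
/- For every strictly ordered bid profile 0 < b_1 < b_2 < ⋯ < b_N, the recursively defined waiting times satisfy the work-conservation identity Σ_{i=1}^{N} ρ_i·W_i = ρ·W₀/(1−ρ). -/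
/-- Work conservation: `Σ_i ρ_i W_i = ρ W₀ / (1 − ρ)` for every strictly
ordered positive bid profile. -/
theorem classW_work_conservation (N : ℕ) (hN : 1 ≤ N)
    (ρ b : Fin N → ℝ) (W0 : ℝ)
    (hρ : ∀ k, 0 < ρ k) (hρsum : ∑ k, ρ k < 1) (hW0 : 0 < W0)
    (hbpos : ∀ k, 0 < b k) (hbmono : StrictMono b) :
    ∑ i : Fin N, ρ i * classW ρ b W0 i = (∑ k, ρ k) * W0 / (1 - ∑ k, ρ k) := by
  have hρ0 : (0:ℝ) < 1 - ∑ k, ρ k := by linarith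
  set C : ℝ := W0 / (1 - ∑ k, ρ k) with hC
  set W : Fin N → ℝ := classW ρ b W0 with hW
  set S : Fin N → ℝ := fun i => ∑ k : Fin N, if i ≤ k then ρ k * (1 - b i / b k) else 0
    with hS
  set A : Fin N → ℝ := fun i => ∑ k : Fin N, if k < i then ρ k * (1 - b k / b i) * W k else 0
    with hA
  -- denominator is bounded below by 1 - ρ > 0
  have hden : ∀ i : Fin N, S i ≤ ∑ k, ρ k := by
    intro i
    apply Finset.sum_le_sum
    intro k _
    split
    · have h1 : 0 < b i / b k := div_pos (hbpos i) (hbpos k)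
      nlinarith [(hρ k).le]
    · exact (hρ k).le
  have hden' : ∀ i : Fin N, (1 - S i) ≠ 0 := by
    intro i
    have := hden i
    intro h
    nlinarith
  -- the recursion, multiplied through by the denominator
  have hkey : ∀ i : Fin N, W i * (1 - S i) = C - A i := by
    intro i
    rw [hW, classW]
    simp only [dite_eq_ite, ← hC, ← hW]
    show (C - A i) / (1 - S i) * (1 - S i) = C - A i
    exact div_mul_cancel₀ _ (hden' i)
  -- main computation
  have step1 : ∑ i : Fin N, ρ i * W i
      = (∑ k, ρ k) * C - (∑ i : Fin N, ρ i * A i) + ∑ i : Fin N, ρ i * W i * S i := by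
    rw [Finset.sum_mul, ← Finset.sum_sub_distrib, ← Finset.sum_add_distrib]
    apply Finset.sum_congr rfl
    intro i _
    linear_combination ρ i * hkey i
  -- the two double sums coincide
  have step2 : (∑ i : Fin N, ρ i * A i) = ∑ i : Fin N, ρ i * W i * S i := by
    have lhs : ∀ i : Fin N, ρ i * A i
        = ∑ k : Fin N, if k < i then ρ i * ρ k * (1 - b k / b i) * W k else 0 := by
      intro i
      rw [hA]
      rw [Finset.mul_sum]
      apply Finset.sum_congr rfl
      intro k _
      rw [mul_ite, mul_zero]
      ring_nf
    have rhs : ∀ i : Fin N, ρ i * W i * S i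
        = ∑ k : Fin N, if i < k then ρ k * ρ i * (1 - b i / b k) * W i else 0 := by
      intro i
      rw [hS, Finset.mul_sum]
      apply Finset.sum_congr rfl
      intro k _
      rw [mul_ite, mul_zero]
      rcases lt_trichotomy i k with h | h | h
      · rw [if_pos h.le, if_pos h]; ring
      · subst h
        rw [if_pos le_rfl, if_neg (lt_irrefl i)]
        have : b i / b i = 1 := div_self (hbpos i).ne'
        rw [this]; ring
      · rw [if_neg (not_le.mpr h), if_neg (asymm h)]
    calc (∑ i : Fin N, ρ i * A i)
        = ∑ i : Fin N, ∑ k : Fin N,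
            (if k < i then ρ i * ρ k * (1 - b k / b i) * W k else 0) :=
          Finset.sum_congr rfl (fun i _ => lhs i)
      _ = ∑ k : Fin N, ∑ i : Fin N,
            (if k < i then ρ i * ρ k * (1 - b k / b i) * W k else 0) := Finset.sum_comm
      _ = ∑ i : Fin N, ρ i * W i * S i :=
          Finset.sum_congr rfl (fun i _ => (rhs i).symm)
  rw [step1, step2]
  ring
end

section
/- For every strictly ordered bid profile 0 < b_1 < b_2 < ⋯ < b_N, the function a ↦ W(a;b) is continuous on (0,∞), and it is consistent with the class recursion: W(b_i;b) = W_i for every i = 1,…,N. -/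
/-- Expected waiting time of a tagged customer bidding `a > 0` against the
strictly ordered bid profile `b`:
`W(a;b) = (W₀/(1−ρ) − Σ_{k: b_k<a} ρ_k(1 − b_k/a)W_k) / (1 − Σ_{k: b_k≥a} ρ_k(1 − a/b_k))`. -/
noncomputable def taggedW {N : ℕ} (ρ b : Fin N → ℝ) (W0 : ℝ) (a : ℝ) : ℝ :=
  (W0 / (1 - ∑ k, ρ k)
    - ∑ k : Fin N, if b k < a then ρ k * (1 - b k / a) * classW ρ b W0 k else 0)
  / (1 - ∑ k : Fin N, if a ≤ b k then ρ k * (1 - a / b k) else 0)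

/-- The tagged waiting-time function `a ↦ W(a;b)` is continuous on `(0,∞)` and
agrees with the class recursion at the class bids: `W(b_i;b) = W_i`. -/
theorem taggedW_continuous_and_consistent (N : ℕ) (hN : 1 ≤ N)
    (ρ b : Fin N → ℝ) (W0 : ℝ)
    (hρ : ∀ k, 0 < ρ k) (hρsum : ∑ k, ρ k < 1) (hW0 : 0 < W0)
    (hbpos : ∀ k, 0 < b k) (hbmono : StrictMono b) :
    ContinuousOn (taggedW ρ b W0) (Set.Ioi (0 : ℝ)) ∧
    (∀ i : Fin N, taggedW ρ b W0 (b i) = classW ρ b W0 i) := by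
  constructor
  · have key : ∀ a ∈ Set.Ioi (0:ℝ), taggedW ρ b W0 a =
        (W0 / (1 - ∑ k, ρ k)
          - ∑ k : Fin N, ρ k * max 0 (1 - b k / a) * classW ρ b W0 k)
        / (1 - ∑ k : Fin N, ρ k * max 0 (1 - a / b k)) := by
      intro a ha
      simp only [Set.mem_Ioi] at ha
      unfold taggedW
      congr 2
      · apply Finset.sum_congr rfl
        intro k _
        by_cases h : b k < a
        · rw [if_pos h, max_eq_right]
          have : b k / a < 1 := (div_lt_one ha).2 h
          linarith
        · rw [if_neg h]
          push_neg at h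
          have : 1 ≤ b k / a := (one_le_div ha).2 h
          rw [max_eq_left (by linarith)]
          ring
      · apply Finset.sum_congr rfl
        intro k _
        by_cases h : a ≤ b k
        · rw [if_pos h, max_eq_right]
          have : a / b k ≤ 1 := (div_le_one (hbpos k)).2 h
          linarith
        · rw [if_neg h]
          push_neg at h
          have : 1 < a / b k := (one_lt_div (hbpos k)).2 h
          rw [max_eq_left (by linarith)]
          ring
    apply ContinuousOn.congr _ key
    apply ContinuousOn.div
    · apply ContinuousOn.sub continuousOn_const
      apply continuousOn_finset_sum
      intro k _
      exact ((continuousOn_const.sup (continuousOn_const.sub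
        (continuousOn_const.div continuousOn_id fun x hx => ne_of_gt hx))).const_smul
        (ρ k)).mul continuousOn_const
    · apply ContinuousOn.sub continuousOn_const
      apply continuousOn_finset_sum
      intro k _
      exact (continuousOn_const.sup (continuousOn_const.sub
        (continuousOn_id.div continuousOn_const fun x _ => (hbpos k).ne'))).const_smul (ρ k)
    · intro a ha
      simp only [Set.mem_Ioi] at ha
      have hle : ∑ k : Fin N, ρ k * max 0 (1 - a / b k) ≤ ∑ k, ρ k := by
        apply Finset.sum_le_sum
        intro k _
        have h1 : max 0 (1 - a / b k) ≤ 1 := by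
          apply max_le (by norm_num)
          have : 0 < a / b k := div_pos ha (hbpos k)
          linarith
        calc ρ k * max 0 (1 - a / b k) ≤ ρ k * 1 :=
              mul_le_mul_of_nonneg_left h1 (hρ k).le
          _ = ρ k := mul_one _
      have : 0 < 1 - ∑ k : Fin N, ρ k * max 0 (1 - a / b k) := by linarith
      exact ne_of_gt this
  · intro i
    rw [taggedW, classW]
    congr 2
    · apply Finset.sum_congr rfl
      intro k _
      simp [hbmono.lt_iff_lt]
    · apply Finset.sum_congr rfl
      intro k _
      simp [hbmono.le_iff_le]
end

section
/- For every strictly ordered bid profile 0 < b_1 < b_2 < ⋯ < b_N, the function a ↦ W(a;b) is differentiable on (0,∞) and its derivative is continuous on (0,∞); in particular the left and right derivatives of W(·;b) agree at each of the points b_1,…,b_N. -/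
/-!
Between consecutive bids, `W(·;b)` is a quotient of smooth functions whose denominator stays
positive because the total load is below one. At a bid `b_i` the formulas on the two sides
differ by the class-`i` terms, which vanish at `a = b_i` but make the derivatives of numerator
and denominator jump by `-ρ_i W_i / b_i` and `-ρ_i / b_i`. These jumps cancel in the quotient
exactly because `W_i` is the value of the left formula at `b_i`, which is Kleinrock's recursion.
-/

open Set Filter Topology

theorem Filter.EventuallyEq.deriv_of_isOpen {f g : ℝ → ℝ} {s : Set ℝ} {x : ℝ} (hs : IsOpen s)
    (h : f =ᶠ[𝓝[s] x] g) : deriv f =ᶠ[𝓝[s] x] deriv g := by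
  rw [Filter.EventuallyEq, ← eventually_nhdsWithin_eventually_nhds_iff_of_isOpen hs] at *
  filter_upwards [h] with y hy using Filter.EventuallyEq.deriv hy

theorem hasDerivAt_add_div_add {p q r s : ℝ → ℝ} {p' q' r' s' x w : ℝ}
    (hp : HasDerivAt p p' x) (hq : HasDerivAt q q' x) (hr : HasDerivAt r r' x)
    (hs : HasDerivAt s s' x) (hq0 : q x ≠ 0) (hr0 : r x = 0) (hs0 : s x = 0)
    (hpq : p x = w * q x) (hrs : r' = w * s') :
    HasDerivAt (fun y => (p y + r y) / (q y + s y)) ((p' * q x - p x * q') / q x ^ 2) x := by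
  refine ((hp.add hr).div (hq.add hs) (by simpa [hs0] using hq0)).congr_deriv ?_
  simp only [Pi.add_apply, hr0, hs0, add_zero, hrs, hpq]
  field_simp
  ring

theorem hasDerivAt_continuousAt_deriv_of_eventuallyEq_left_right {f g₁ g₂ : ℝ → ℝ} {a : ℝ}
    (h₁ : f =ᶠ[𝓝[≤] a] g₁) (h₂ : f =ᶠ[𝓝[>] a] g₂) (hval : g₁ a = g₂ a)
    (hg₁ : DifferentiableAt ℝ g₁ a) (hg₂ : DifferentiableAt ℝ g₂ a)
    (hg₁' : ContinuousAt (deriv g₁) a) (hg₂' : ContinuousAt (deriv g₂) a)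
    (hder : deriv g₁ a = deriv g₂ a) :
    HasDerivAt f (deriv g₁ a) a ∧ ContinuousAt (deriv f) a := by
  have hfa : f a = g₁ a := h₁.eq_of_nhdsWithin (mem_Iic.2 le_rfl)
  have hf : HasDerivAt f (deriv g₁ a) a := by
    have hL : HasDerivWithinAt f (deriv g₁ a) (Iic a) a :=
      hg₁.hasDerivAt.hasDerivWithinAt.congr_of_eventuallyEq h₁ hfa
    have hR : HasDerivWithinAt f (deriv g₁ a) (Ioi a) a := by
      rw [hder]
      exact hg₂.hasDerivAt.hasDerivWithinAt.congr_of_eventuallyEq h₂ (hfa.trans hval)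
    simpa using hL.union hR.Ici_of_Ioi
  refine ⟨hf, continuousAt_iff_continuous_left'_right'.2 ⟨?_, ?_⟩⟩
  · exact hg₁'.continuousWithinAt.congr_of_eventuallyEq
      ((h₁.filter_mono (nhdsWithin_mono _ Iio_subset_Iic_self)).deriv_of_isOpen isOpen_Iio)
      hf.deriv
  · exact hg₂'.continuousWithinAt.congr_of_eventuallyEq (h₂.deriv_of_isOpen isOpen_Ioi)
      (hf.deriv.trans hder)

namespace AccumulatingPriority

variable {N : ℕ} (ρ b : Fin N → ℝ) (W0 : ℝ)

noncomputable def numer (S : Finset (Fin N)) (a : ℝ) : ℝ :=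
  W0 / (1 - ∑ k, ρ k) - ∑ k ∈ S, ρ k * (1 - b k / a) * classW ρ b W0 k

noncomputable def denom (S : Finset (Fin N)) (a : ℝ) : ℝ :=
  1 - ∑ k ∈ Sᶜ, ρ k * (1 - a / b k)

noncomputable def localW (S : Finset (Fin N)) (a : ℝ) : ℝ :=
  numer ρ b W0 S a / denom ρ b S a

theorem taggedW_eq_localW {S : Finset (Fin N)} {a : ℝ} (hS : ∀ k, k ∈ S ↔ b k < a) :
    taggedW ρ b W0 a = localW ρ b W0 S a := by
  have hlt : Finset.univ.filter (fun k => b k < a) = S := by ext k; simp [hS]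
  have hge : Finset.univ.filter (fun k => a ≤ b k) = Sᶜ := by ext k; simp [hS]
  rw [taggedW, localW, numer, denom, ← Finset.sum_filter, ← Finset.sum_filter, hlt, hge]

theorem taggedW_bid (hb : StrictMono b) (i : Fin N) :
    taggedW ρ b W0 (b i) = classW ρ b W0 i := by
  rw [classW, taggedW]
  congr 2
  · exact Finset.sum_congr rfl fun k _ => by rw [dite_eq_ite]; exact if_congr hb.lt_iff_lt rfl rfl
  · exact Finset.sum_congr rfl fun k _ => if_congr hb.le_iff_le rfl rfl

theorem taggedW_eventuallyEq_left (a : ℝ) :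
    taggedW ρ b W0 =ᶠ[𝓝[≤] a] localW ρ b W0 (Finset.univ.filter fun k => b k < a) := by
  have h : ∀ᶠ x in 𝓝[≤] a, ∀ k, b k < a → b k < x :=
    eventually_all.2 fun k => by
      by_cases hk : b k < a
      · filter_upwards [(eventually_gt_nhds hk).filter_mono nhdsWithin_le_nhds] with x hx _ using hx
      · exact Eventually.of_forall fun x h => absurd h hk
  filter_upwards [h, self_mem_nhdsWithin] with x hx hxa
  exact taggedW_eq_localW ρ b W0 fun k => by
    simpa using ⟨hx k, fun h => lt_of_lt_of_le h hxa⟩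

theorem taggedW_eventuallyEq_right (a : ℝ) :
    taggedW ρ b W0 =ᶠ[𝓝[>] a] localW ρ b W0 (Finset.univ.filter fun k => b k ≤ a) := by
  have h : ∀ᶠ x in 𝓝[>] a, ∀ k, a < b k → x < b k :=
    eventually_all.2 fun k => by
      by_cases hk : a < b k
      · filter_upwards [(eventually_lt_nhds hk).filter_mono nhdsWithin_le_nhds] with x hx _ using hx
      · exact Eventually.of_forall fun x h => absurd h hk
  filter_upwards [h, self_mem_nhdsWithin] with x hx hxa
  refine taggedW_eq_localW ρ b W0 fun k => ?_
  simp only [Finset.mem_filter, Finset.mem_univ, true_and]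
  exact ⟨fun h => lt_of_le_of_lt h hxa, fun h => not_lt.1 fun h' => (hx k h').not_gt h⟩

theorem denom_pos (hρ : ∀ k, 0 ≤ ρ k) (hρsum : ∑ k, ρ k < 1) (hb : ∀ k, 0 < b k)
    (S : Finset (Fin N)) {a : ℝ} (ha : 0 ≤ a) : 0 < denom ρ b S a := by
  have hsum : ∑ k ∈ Sᶜ, ρ k * (1 - a / b k) ≤ ∑ k, ρ k :=
    calc ∑ k ∈ Sᶜ, ρ k * (1 - a / b k)
        ≤ ∑ k ∈ Sᶜ, ρ k := Finset.sum_le_sum fun k _ =>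
          mul_le_of_le_one_right (hρ k) (sub_le_self _ (div_nonneg ha (hb k).le))
      _ ≤ ∑ k, ρ k := Finset.sum_le_sum_of_subset_of_nonneg (Finset.subset_univ _)
          fun k _ _ => hρ k
  rw [denom]
  linarith

theorem contDiffOn_localW (hρ : ∀ k, 0 ≤ ρ k) (hρsum : ∑ k, ρ k < 1) (hb : ∀ k, 0 < b k)
    (S : Finset (Fin N)) : ContDiffOn ℝ 1 (localW ρ b W0 S) (Ioi 0) := by
  have hnumer : ContDiffOn ℝ 1 (numer ρ b W0 S) (Ioi 0) := by
    unfold numer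
    fun_prop (disch := exact fun x hx => ne_of_gt hx)
  have hdenom : ContDiffOn ℝ 1 (denom ρ b S) (Ioi 0) := by
    unfold denom
    fun_prop
  exact hnumer.div hdenom fun a ha => (denom_pos ρ b hρ hρsum hb S (le_of_lt ha)).ne'

theorem numer_insert {S : Finset (Fin N)} {i : Fin N} (hi : i ∉ S) (a : ℝ) :
    numer ρ b W0 (insert i S) a = numer ρ b W0 S a + ρ i * (b i / a - 1) * classW ρ b W0 i := by
  rw [numer, numer, Finset.sum_insert hi]
  ring

theorem denom_insert {S : Finset (Fin N)} {i : Fin N} (hi : i ∉ S) (a : ℝ) :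
    denom ρ b (insert i S) a = denom ρ b S a + ρ i * (1 - a / b i) := by
  rw [denom, denom, Finset.compl_insert, ← Finset.add_sum_erase _ _ (Finset.mem_compl.2 hi)]
  ring

theorem localW_insert_bid {S : Finset (Fin N)} {i : Fin N} (hi : i ∉ S) (hbi : b i ≠ 0) :
    localW ρ b W0 (insert i S) (b i) = localW ρ b W0 S (b i) := by
  simp [localW, numer_insert ρ b W0 hi, denom_insert ρ b hi, div_self hbi]

theorem deriv_localW_insert_bid (hρ : ∀ k, 0 ≤ ρ k) (hρsum : ∑ k, ρ k < 1) (hb : ∀ k, 0 < b k)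
    {S : Finset (Fin N)} {i : Fin N} (hi : i ∉ S)
    (hbid : localW ρ b W0 S (b i) = classW ρ b W0 i) :
    deriv (localW ρ b W0 (insert i S)) (b i) = deriv (localW ρ b W0 S) (b i) := by
  have hbi : b i ≠ 0 := (hb i).ne'
  have hq : denom ρ b S (b i) ≠ 0 := (denom_pos ρ b hρ hρsum hb S (hb i).le).ne'
  have hnumer : DifferentiableAt ℝ (numer ρ b W0 S) (b i) := by
    unfold numer
    fun_prop (disch := exact hbi)
  have hdenom : DifferentiableAt ℝ (denom ρ b S) (b i) := by
    unfold denom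
    fun_prop
  have hr : HasDerivAt (fun a => ρ i * (b i / a - 1) * classW ρ b W0 i)
      (ρ i * (b i * -(b i ^ 2)⁻¹) * classW ρ b W0 i) (b i) :=
    (((hasDerivAt_inv hbi).const_mul (b i)).sub_const 1 |>.const_mul (ρ i)).mul_const _
  have hs : HasDerivAt (fun a => ρ i * (1 - a / b i)) (ρ i * -(1 / b i)) (b i) :=
    (((hasDerivAt_id _).div_const (b i)).const_sub 1).const_mul (ρ i)
  have hinsert := hasDerivAt_add_div_add (w := classW ρ b W0 i) hnumer.hasDerivAt
    hdenom.hasDerivAt hr hs hq (by simp [div_self hbi]) (by simp [div_self hbi])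
    (by rw [← hbid, localW, div_mul_cancel₀ _ hq]) (by field_simp)
  have hloc : localW ρ b W0 (insert i S) = fun a => (numer ρ b W0 S a + ρ i * (b i / a - 1) *
      classW ρ b W0 i) / (denom ρ b S a + ρ i * (1 - a / b i)) := by
    funext a
    rw [localW, numer_insert ρ b W0 hi, denom_insert ρ b hi]
  rw [hloc, hinsert.deriv]
  exact (hnumer.hasDerivAt.div hdenom.hasDerivAt hq).deriv.symm

theorem filter_le_bid (hb : StrictMono b) (i : Fin N) :
    Finset.univ.filter (fun k => b k ≤ b i) =
      insert i (Finset.univ.filter fun k => b k < b i) := by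
  ext k
  simp [le_iff_lt_or_eq, hb.injective.eq_iff, or_comm]

theorem differentiableAt_taggedW_and_continuousAt_deriv (hρ : ∀ k, 0 ≤ ρ k)
    (hρsum : ∑ k, ρ k < 1) (hb : ∀ k, 0 < b k) (hmono : StrictMono b) {a : ℝ} (ha : 0 < a) :
    DifferentiableAt ℝ (taggedW ρ b W0) a ∧ ContinuousAt (deriv (taggedW ρ b W0)) a := by
  set S := Finset.univ.filter fun k => b k < a
  set T := Finset.univ.filter fun k => b k ≤ a
  have hsmooth : ∀ U : Finset (Fin N), DifferentiableAt ℝ (localW ρ b W0 U) a ∧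
      ContinuousAt (deriv (localW ρ b W0 U)) a := fun U => by
    have h := contDiffOn_localW ρ b W0 hρ hρsum hb U
    exact ⟨(h.differentiableOn one_ne_zero a ha).differentiableAt (Ioi_mem_nhds ha),
      (h.continuousOn_deriv_of_isOpen isOpen_Ioi le_rfl).continuousAt (Ioi_mem_nhds ha)⟩
  have hmatch : localW ρ b W0 S a = localW ρ b W0 T a ∧
      deriv (localW ρ b W0 S) a = deriv (localW ρ b W0 T) a := by
    by_cases hbid : ∃ i, b i = a
    · obtain ⟨i, rfl⟩ := hbid
      have hi : i ∉ S := by simp [S]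
      have hclass : localW ρ b W0 S (b i) = classW ρ b W0 i := by
        rw [← taggedW_eq_localW ρ b W0 (by simp [S]), taggedW_bid ρ b W0 hmono]
      have hT : T = insert i S := filter_le_bid b hmono i
      rw [hT]
      exact ⟨(localW_insert_bid ρ b W0 hi (hb i).ne').symm,
        (deriv_localW_insert_bid ρ b W0 hρ hρsum hb hi hclass).symm⟩
    · simp only [not_exists] at hbid
      have hST : S = T := Finset.filter_congr fun k _ =>
        lt_iff_le_and_ne.trans (and_iff_left (hbid k))
      rw [hST]
      exact ⟨rfl, rfl⟩
  have h := hasDerivAt_continuousAt_deriv_of_eventuallyEq_left_right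
    (taggedW_eventuallyEq_left ρ b W0 a) (taggedW_eventuallyEq_right ρ b W0 a) hmatch.1
    (hsmooth S).1 (hsmooth T).1 (hsmooth S).2 (hsmooth T).2 hmatch.2
  exact ⟨h.1.differentiableAt, h.2⟩

end AccumulatingPriority

theorem taggedW_differentiable_deriv_continuous_general (N : ℕ)
    (ρ b : Fin N → ℝ) (W0 : ℝ)
    (hρ : ∀ k, 0 < ρ k) (hρsum : ∑ k, ρ k < 1)
    (hbpos : ∀ k, 0 < b k) (hbmono : StrictMono b) :
    (∀ a ∈ Set.Ioi (0 : ℝ), DifferentiableAt ℝ (taggedW ρ b W0) a) ∧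
    ContinuousOn (deriv (taggedW ρ b W0)) (Set.Ioi (0 : ℝ)) ∧
    (∀ i : Fin N,
      derivWithin (taggedW ρ b W0) (Set.Iic (b i)) (b i) =
        derivWithin (taggedW ρ b W0) (Set.Ici (b i)) (b i)) := by
  have key : ∀ a ∈ Ioi (0 : ℝ), DifferentiableAt ℝ (taggedW ρ b W0) a ∧
      ContinuousAt (deriv (taggedW ρ b W0)) a := fun a ha =>
    AccumulatingPriority.differentiableAt_taggedW_and_continuousAt_deriv ρ b W0
      (fun k => (hρ k).le) hρsum hbpos hbmono ha
  refine ⟨fun a ha => (key a ha).1, fun a ha => (key a ha).2.continuousWithinAt, fun i => ?_⟩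
  have hd := (key (b i) (hbpos i)).1
  rw [hd.derivWithin (uniqueDiffWithinAt_Iic _), hd.derivWithin (uniqueDiffWithinAt_Ici _)]

/-- The tagged waiting-time function `a ↦ W(a;b)` is differentiable on `(0,∞)`
with continuous derivative there; in particular the left and right derivatives
agree at each class bid `b_i`. -/
theorem taggedW_differentiable_deriv_continuous (N : ℕ) (hN : 1 ≤ N)
    (ρ b : Fin N → ℝ) (W0 : ℝ)
    (hρ : ∀ k, 0 < ρ k) (hρsum : ∑ k, ρ k < 1) (hW0 : 0 < W0)
    (hbpos : ∀ k, 0 < b k) (hbmono : StrictMono b) :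
    (∀ a ∈ Set.Ioi (0 : ℝ), DifferentiableAt ℝ (taggedW ρ b W0) a) ∧
    ContinuousOn (deriv (taggedW ρ b W0)) (Set.Ioi (0 : ℝ)) ∧
    (∀ i : Fin N,
      derivWithin (taggedW ρ b W0) (Set.Iic (b i)) (b i) =
        derivWithin (taggedW ρ b W0) (Set.Ici (b i)) (b i)) :=
  taggedW_differentiable_deriv_continuous_general N ρ b W0 hρ hρsum hbpos hbmono
end

section
/- For every strictly ordered bid profile 0 < b_1 < b_2 < ⋯ < b_N, the function a ↦ W(a;b) is strictly decreasing and strictly convex on (0,∞). -/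
/-!
Between consecutive bids, `W(a;b)` is a linear-fractional function `(P + Q/a) / (R + S a)` of
the tagged bid, with `P, R > 0` and `Q, S ≥ 0`; such a function is strictly decreasing and has a
strictly increasing derivative. At a bid `a = b_c` the two neighbouring pieces share their tangent,
because the recursion defining `W_c` says exactly that `(b_c, W_c)` lies on both graphs. Hence
`W(·;b)` is differentiable on `(0,∞)` with a negative, strictly increasing derivative. The
positivity of `P`, and of the class waiting times `W_k` by induction on `k`, comes from
Kleinrock's conservation law, which reads `P R - Q S = W₀` on every piece.
-/

open Set Filter Topology
open scoped Finset

noncomputable section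

section LinFrac

def linFrac (P Q R S x : ℝ) : ℝ := (P + Q / x) / (R + S * x)

def linFracDeriv (P Q R S x : ℝ) : ℝ :=
  -((Q * R / x ^ 2 + 2 * (Q * S) / x + P * S) / (R + S * x) ^ 2)

theorem hasDerivAt_linFrac (P Q R S : ℝ) {x : ℝ} (hx : x ≠ 0) (hden : R + S * x ≠ 0) :
    HasDerivAt (linFrac P Q R S) (linFracDeriv P Q R S x) x := by
  have hnum : HasDerivAt (fun x => P + Q / x) (-(Q / x ^ 2)) x := by
    simpa [div_eq_mul_inv] using ((hasDerivAt_inv hx).const_mul Q).const_add P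
  have hlin : HasDerivAt (fun x => R + S * x) S x := by
    simpa using ((hasDerivAt_id x).const_mul S).const_add R
  refine (hnum.div hlin hden).congr_deriv ?_
  rw [linFracDeriv]
  field_simp
  ring

/-- The update adds `r w (t/x - 1)` to the numerator and `r (1 - x/t)` to the denominator; both
vanish at `x = t`, and when `(t, w)` is on the graph their first-order effects cancel. -/
theorem linFracDeriv_update {P Q R S : ℝ} (r w : ℝ) {t : ℝ} (ht : t ≠ 0)
    (hw : w * (R + S * t) = P + Q / t) :
    linFracDeriv (P - r * w) (Q + r * t * w) (R + r) (S - r / t) t = linFracDeriv P Q R S t := by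
  have hden : R + r + (S - r / t) * t = R + S * t := by field_simp; ring
  unfold linFracDeriv
  rw [hden]
  congr 2
  field_simp at hw ⊢
  linear_combination r * hw

theorem hasDerivAt_of_eventuallyEq_Iic_Ici {f g h : ℝ → ℝ} {a f' : ℝ}
    (hg : HasDerivAt g f' a) (hh : HasDerivAt h f' a) (hfg : f =ᶠ[𝓝[≤] a] g)
    (hfh : f =ᶠ[𝓝[≥] a] h) :
    HasDerivAt f f' a := by
  have hleft := hg.hasDerivWithinAt.congr_of_eventuallyEq hfg
    (hfg.eq_of_nhdsWithin self_mem_Iic)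
  have hright := hh.hasDerivWithinAt.congr_of_eventuallyEq hfh
    (hfh.eq_of_nhdsWithin self_mem_Ici)
  have := hleft.union hright
  rwa [Iic_union_Ici, hasDerivWithinAt_univ] at this

variable {P Q R S : ℝ} (hP : 0 < P) (hQ : 0 ≤ Q) (hR : 0 < R) (hS : 0 ≤ S)
include hP hQ hR hS

theorem linFracDeriv_neg (hQS : 0 < Q ∨ 0 < S) {x : ℝ} (hx : 0 < x) :
    linFracDeriv P Q R S x < 0 := by
  unfold linFracDeriv
  rw [neg_lt_zero]
  rcases hQS with hQ' | hS' <;> positivity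

theorem linFracDeriv_strictMonoOn (hQS : 0 < Q ∨ 0 < S) :
    StrictMonoOn (linFracDeriv P Q R S) (Ioi 0) := by
  intro x (hx : 0 < x) y (hy : 0 < y) hxy
  unfold linFracDeriv
  rw [neg_lt_neg_iff]
  have hA : Q * R / y ^ 2 + 2 * (Q * S) / y ≤ Q * R / x ^ 2 + 2 * (Q * S) / x := by
    gcongr
  have hB : R + S * x ≤ R + S * y := by gcongr
  rcases hQS with hQ' | hS'
  · have hA' : Q * R / y ^ 2 < Q * R / x ^ 2 := by gcongr
    have : 2 * (Q * S) / y ≤ 2 * (Q * S) / x := by gcongr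
    apply div_lt_div₀ (by linarith) (by gcongr) (by positivity) (by positivity)
  · have hB' : R + S * x < R + S * y := by gcongr
    apply div_lt_div₀' (by linarith) (by gcongr) (by positivity) (by positivity)

end LinFrac

theorem Finset.sum_ite_eq_sum_filter_of_ne {ι M : Type*} [Fintype ι] [AddCommMonoid M]
    {p q : ι → Prop} [DecidablePred p] [DecidablePred q] (f : ι → M)
    (h : ∀ k, ¬(p k ↔ q k) → f k = 0) :
    (∑ k, if p k then f k else 0) = ∑ k with q k, f k := by
  rw [Finset.sum_filter]
  refine Finset.sum_congr rfl fun k _ => ?_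
  by_cases hp : p k <;> by_cases hq : q k <;> simp_all

section CutCount

open scoped Classical

variable {α : Type*} {N : ℕ}

def cutCount (t : Fin N → α) (s : Set α) : ℕ := #{k | t k ∈ s}

theorem cutCount_le (t : Fin N → α) (s : Set α) : cutCount t s ≤ N :=
  (Finset.card_filter_le _ _).trans_eq (Finset.card_fin N)

theorem cutCount_mono (t : Fin N → α) {s s' : Set α} (h : s ⊆ s') :
    cutCount t s ≤ cutCount t s' :=
  Finset.card_le_card (Finset.monotone_filter_right _ fun _ _ hk => h hk)

theorem cutCount_congr (t : Fin N → α) {s s' : Set α} (h : ∀ k, t k ∈ s ↔ t k ∈ s') :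
    cutCount t s = cutCount t s' := by
  simp only [cutCount, h]

variable [LinearOrder α]

theorem lt_card_iff_mem_of_isLowerSet {u : Finset (Fin N)} (hu : IsLowerSet (u : Set (Fin N)))
    (k : Fin N) : k.val < #u ↔ k ∈ u := by
  constructor
  · intro hk
    by_contra hku
    have : u ⊆ Finset.Iio k := fun j hj => Finset.mem_Iio.2 <|
      lt_of_not_ge fun hkj => hku (hu hkj hj)
    have := Finset.card_le_card this
    rw [Fin.card_Iio] at this
    omega
  · intro hku
    have := Finset.card_le_card fun j hj => hu (Finset.mem_Iic.1 hj) hku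
    rw [Fin.card_Iic] at this
    omega

theorem val_lt_cutCount_iff {t : Fin N → α} (ht : Monotone t) {s : Set α} (hs : IsLowerSet s)
    (k : Fin N) : k.val < cutCount t s ↔ t k ∈ s := by
  rw [cutCount, lt_card_iff_mem_of_isLowerSet, Finset.mem_filter_univ]
  intro i j hij hj
  simp only [Finset.coe_filter, Finset.mem_univ, true_and, Set.mem_ofPred_eq] at hj ⊢
  exact hs (ht hij) hj

theorem cutCount_Iio_apply {t : Fin N → α} (ht : StrictMono t) (k : Fin N) :
    cutCount t (Iio (t k)) = k := by
  rw [cutCount, ← Fin.card_Iio k]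
  congr 1
  ext j
  simp [ht.lt_iff_lt]

theorem cutCount_Iic_apply {t : Fin N → α} (ht : StrictMono t) (k : Fin N) :
    cutCount t (Iic (t k)) = k + 1 := by
  rw [cutCount, ← Fin.card_Iic k]
  congr 1
  ext j
  simp [ht.le_iff_le]

theorem strictMonoOn_of_pieces {β : Type*} [Preorder β] {t : Fin N → α} (ht : StrictMono t)
    {s : Set α} (hs : s.OrdConnected) {G : ℕ → α → β} (hG : ∀ m, StrictMonoOn (G m) s)
    (hglue : ∀ k : Fin N, G k (t k) = G (k + 1) (t k)) :
    StrictMonoOn (fun x => G (cutCount t (Iio x)) x) s := by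
  intro x hx y hy hxy
  dsimp only
  induction hj : cutCount t (Iio y) generalizing x y with
  | zero =>
    rw [Nat.le_zero.1 ((cutCount_mono t (Iio_subset_Iio hxy.le)).trans_eq hj)]
    exact hG 0 hx hy hxy
  | succ i ih =>
    rcases ((cutCount_mono t (Iio_subset_Iio hxy.le)).trans_eq hj).eq_or_lt with heq | hlt
    · rw [heq]
      exact hG _ hx hy hxy
    set k : Fin N := ⟨i, by have := cutCount_le t (Iio y); omega⟩
    have hky : t k < y := (val_lt_cutCount_iff ht.monotone (isLowerSet_Iio y) k).1
      (by rw [hj]; exact Nat.lt_succ_self i)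
    have hxk : x ≤ t k := le_of_not_gt fun h =>
      ((val_lt_cutCount_iff ht.monotone (isLowerSet_Iio x) k).2 h).not_ge (Nat.lt_succ_iff.1 hlt)
    have hk : t k ∈ s := hs.out hx hy ⟨hxk, hky.le⟩
    calc G (cutCount t (Iio x)) x ≤ G i (t k) := by
          rcases hxk.eq_or_lt with h | h
          · rw [h, cutCount_Iio_apply ht]
          · exact (ih hx hk h (cutCount_Iio_apply ht k)).le
      _ = G (i + 1) (t k) := hglue k
      _ < G (i + 1) y := hG _ hk hy hky

end CutCount

namespace AccumulatingPriority

variable {N : ℕ} (ρ b : Fin N → ℝ) (W0 : ℝ)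

def lowCut (m : ℕ) : Finset (Fin N) := {k | k.val < m}

def coefP (m : ℕ) : ℝ :=
  W0 / (1 - ∑ k, ρ k) - ∑ k ∈ lowCut m, ρ k * classW ρ b W0 k

def coefQ (m : ℕ) : ℝ := ∑ k ∈ lowCut m, ρ k * b k * classW ρ b W0 k

def coefR (m : ℕ) : ℝ := 1 - ∑ k ∈ (lowCut m)ᶜ, ρ k

def coefS (m : ℕ) : ℝ := ∑ k ∈ (lowCut m)ᶜ, ρ k / b k

-- `W(·;b)` on the bids at which exactly the classes `k < m` bid lower than the tagged customer.
def piece (m : ℕ) : ℝ → ℝ :=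
  linFrac (coefP ρ b W0 m) (coefQ ρ b W0 m) (coefR ρ m) (coefS ρ b m)

def pieceDeriv (m : ℕ) : ℝ → ℝ :=
  linFracDeriv (coefP ρ b W0 m) (coefQ ρ b W0 m) (coefR ρ m) (coefS ρ b m)

/-- Classes bidding exactly `x` contribute zero to both sums in `taggedW`, which is why `s` may
be any lower set between `Iio x` and `Iic x` on the bids. -/
theorem taggedW_eq_piece {x : ℝ} (hx : 0 < x) {s : Set ℝ} (hs : IsLowerSet s)
    (hb : Monotone b) (hlt : ∀ k, b k < x → b k ∈ s) (hle : ∀ k, b k ∈ s → b k ≤ x) :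
    taggedW ρ b W0 x = piece ρ b W0 (cutCount b s) x := by
  have hcut (k : Fin N) (hk : b k ≠ x) : b k < x ↔ k.val < cutCount b s :=
    (Iff.intro (hlt k) fun h => (hle k h).lt_of_ne hk).trans (val_lt_cutCount_iff hb hs k).symm
  have hnum : (∑ k, if b k < x then ρ k * (1 - b k / x) * classW ρ b W0 k else 0)
      = ∑ k ∈ lowCut (cutCount b s), ρ k * (1 - b k / x) * classW ρ b W0 k := by
    refine Finset.sum_ite_eq_sum_filter_of_ne _ fun k hk => ?_
    have : b k = x := by_contra fun hne => hk (hcut k hne)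
    simp [this, hx.ne']
  have hden : (∑ k, if x ≤ b k then ρ k * (1 - x / b k) else 0)
      = ∑ k ∈ (lowCut (cutCount b s))ᶜ, ρ k * (1 - x / b k) := by
    rw [lowCut, Finset.compl_filter]
    refine Finset.sum_ite_eq_sum_filter_of_ne _ fun k hk => ?_
    have : b k = x := by_contra fun hne => hk (by rw [← hcut k hne, not_lt])
    simp [this, hx.ne']
  have hnum' : ∑ k ∈ lowCut (cutCount b s), ρ k * (1 - b k / x) * classW ρ b W0 k
      = ∑ k ∈ lowCut (cutCount b s), ρ k * classW ρ b W0 k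
        - (∑ k ∈ lowCut (cutCount b s), ρ k * b k * classW ρ b W0 k) / x := by
    rw [Finset.sum_div, ← Finset.sum_sub_distrib]
    exact Finset.sum_congr rfl fun k _ => by ring
  have hden' : ∑ k ∈ (lowCut (cutCount b s))ᶜ, ρ k * (1 - x / b k)
      = ∑ k ∈ (lowCut (cutCount b s))ᶜ, ρ k
        - (∑ k ∈ (lowCut (cutCount b s))ᶜ, ρ k / b k) * x := by
    rw [Finset.sum_mul, ← Finset.sum_sub_distrib]
    exact Finset.sum_congr rfl fun k _ => by ring
  rw [taggedW, hnum, hden, hnum', hden', piece, linFrac, coefP, coefQ, coefR, coefS]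
  ring

theorem classW_eq_taggedW (hb : StrictMono b) (c : Fin N) :
    classW ρ b W0 c = taggedW ρ b W0 (b c) := by
  rw [classW, taggedW]
  simp only [dite_eq_ite, hb.lt_iff_lt, hb.le_iff_le]

theorem classW_eq_piece (hbpos : ∀ k, 0 < b k) (hb : StrictMono b) (c : Fin N) :
    classW ρ b W0 c = piece ρ b W0 c (b c) := by
  rw [classW_eq_taggedW ρ b W0 hb, taggedW_eq_piece ρ b W0 (hbpos c) (isLowerSet_Iio _)
    hb.monotone (fun _ => id) (fun _ h => h.le), cutCount_Iio_apply hb]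

theorem coefR_pos (hρ : ∀ k, 0 ≤ ρ k) (hρsum : ∑ k, ρ k < 1) (m : ℕ) :
    0 < coefR ρ m := by
  have := Finset.sum_le_sum_of_subset_of_nonneg (Finset.subset_univ (lowCut m)ᶜ)
    fun k _ _ => hρ k
  rw [coefR]
  linarith

theorem coefS_nonneg (hρ : ∀ k, 0 ≤ ρ k) (hbpos : ∀ k, 0 < b k) (m : ℕ) :
    0 ≤ coefS ρ b m :=
  Finset.sum_nonneg fun k _ => div_nonneg (hρ k) (hbpos k).le

theorem coefR_add_coefS_mul_pos (hρ : ∀ k, 0 ≤ ρ k) (hρsum : ∑ k, ρ k < 1)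
    (hbpos : ∀ k, 0 < b k) (m : ℕ) {x : ℝ} (hx : 0 ≤ x) :
    0 < coefR ρ m + coefS ρ b m * x :=
  add_pos_of_pos_of_nonneg (coefR_pos ρ hρ hρsum m)
    (mul_nonneg (coefS_nonneg ρ b hρ hbpos m) hx)

theorem lowCut_succ {m : ℕ} (h : m < N) : lowCut (m + 1) = insert ⟨m, h⟩ (lowCut m) := by
  ext k
  simp only [lowCut, Finset.mem_filter_univ, Finset.mem_insert, Fin.ext_iff]
  omega

theorem lowCut_succ_of_le {m : ℕ} (h : N ≤ m) : lowCut (N := N) (m + 1) = lowCut m := by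
  ext k
  simp only [lowCut, Finset.mem_filter_univ]
  omega

section Succ

variable {m : ℕ} (h : m < N)
include h

theorem notMem_lowCut : (⟨m, h⟩ : Fin N) ∉ lowCut m := by simp [lowCut]

theorem coefP_succ :
    coefP ρ b W0 (m + 1) = coefP ρ b W0 m - ρ ⟨m, h⟩ * classW ρ b W0 ⟨m, h⟩ := by
  rw [coefP, coefP, lowCut_succ h, Finset.sum_insert (notMem_lowCut h)]
  ring

theorem coefQ_succ :
    coefQ ρ b W0 (m + 1)
      = coefQ ρ b W0 m + ρ ⟨m, h⟩ * b ⟨m, h⟩ * classW ρ b W0 ⟨m, h⟩ := by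
  rw [coefQ, coefQ, lowCut_succ h, Finset.sum_insert (notMem_lowCut h)]
  ring

theorem coefR_succ : coefR ρ (m + 1) = coefR ρ m + ρ ⟨m, h⟩ := by
  rw [coefR, coefR, lowCut_succ h, Finset.compl_insert,
    ← Finset.add_sum_erase _ _ (Finset.mem_compl.2 (notMem_lowCut h))]
  ring

theorem coefS_succ : coefS ρ b (m + 1) = coefS ρ b m - ρ ⟨m, h⟩ / b ⟨m, h⟩ := by
  rw [coefS, coefS, lowCut_succ h, Finset.compl_insert,
    ← Finset.add_sum_erase _ _ (Finset.mem_compl.2 (notMem_lowCut h))]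
  ring

end Succ

theorem coefQ_nonneg_of (hρ : ∀ k, 0 ≤ ρ k) (hb : ∀ k, 0 ≤ b k) {m : ℕ}
    (hW : ∀ k ∈ lowCut m, 0 ≤ classW ρ b W0 k) : 0 ≤ coefQ ρ b W0 m :=
  Finset.sum_nonneg fun k hk => mul_nonneg (mul_nonneg (hρ k) (hb k)) (hW k hk)

section Conservation

variable (hρ : ∀ k, 0 ≤ ρ k) (hρsum : ∑ k, ρ k < 1) (hbpos : ∀ k, 0 < b k)
  (hb : StrictMono b)
include hρ hρsum hbpos hb

theorem classW_mul_den (c : Fin N) :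
    classW ρ b W0 c * (coefR ρ c + coefS ρ b c * b c)
      = coefP ρ b W0 c + coefQ ρ b W0 c / b c := by
  rw [classW_eq_piece ρ b W0 hbpos hb, piece, linFrac,
    div_mul_cancel₀ _ (coefR_add_coefS_mul_pos ρ b hρ hρsum hbpos c (hbpos c).le).ne']

/-- Kleinrock's conservation law, in the form of an invariant of the pieces. -/
theorem coefP_mul_coefR_sub_coefQ_mul_coefS (m : ℕ) :
    coefP ρ b W0 m * coefR ρ m - coefQ ρ b W0 m * coefS ρ b m = W0 := by
  induction m with
  | zero =>
    have : 1 - ∑ k, ρ k ≠ 0 := by linarith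
    simp only [coefP, coefQ, coefR, coefS, lowCut, not_lt_zero, Finset.filter_false,
      Finset.sum_empty, Finset.compl_empty, sub_zero, zero_mul]
    field_simp
  | succ m ih =>
    rcases lt_or_ge m N with h | h
    · have hw := classW_mul_den ρ b W0 hρ hρsum hbpos hb ⟨m, h⟩
      have hbm := (hbpos ⟨m, h⟩).ne'
      rw [coefP_succ ρ b W0 h, coefQ_succ ρ b W0 h, coefR_succ ρ h, coefS_succ ρ b h]
      field_simp at hw ⊢
      linear_combination b ⟨m, h⟩ * ih - ρ ⟨m, h⟩ * hw
    · simpa only [coefP, coefQ, coefR, coefS, lowCut_succ_of_le h] using ih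

theorem coefP_pos_of_coefQ_nonneg (hW0 : 0 < W0) {m : ℕ} (hQ : 0 ≤ coefQ ρ b W0 m) :
    0 < coefP ρ b W0 m := by
  have hR := coefR_pos ρ hρ hρsum m
  have hS := coefS_nonneg ρ b hρ hbpos m
  have hdet := coefP_mul_coefR_sub_coefQ_mul_coefS ρ b W0 hρ hρsum hbpos hb m
  exact pos_of_mul_pos_left (by nlinarith [mul_nonneg hQ hS]) hR.le

theorem classW_pos (hW0 : 0 < W0) (c : Fin N) : 0 < classW ρ b W0 c := by
  induction c using WellFoundedLT.induction with
  | _ c ih =>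
  have hQ : 0 ≤ coefQ ρ b W0 c := coefQ_nonneg_of ρ b W0 hρ (fun k => (hbpos k).le)
    fun k hk => (ih k (by simpa [lowCut] using hk)).le
  rw [classW_eq_piece ρ b W0 hbpos hb, piece, linFrac]
  refine div_pos ?_ (coefR_add_coefS_mul_pos ρ b hρ hρsum hbpos c (hbpos c).le)
  exact add_pos_of_pos_of_nonneg (coefP_pos_of_coefQ_nonneg ρ b W0 hρ hρsum hbpos hb hW0 hQ)
    (div_nonneg hQ (hbpos c).le)

theorem coefQ_nonneg (hW0 : 0 < W0) (m : ℕ) : 0 ≤ coefQ ρ b W0 m :=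
  coefQ_nonneg_of ρ b W0 hρ (fun k => (hbpos k).le) fun k _ =>
    (classW_pos ρ b W0 hρ hρsum hbpos hb hW0 k).le

theorem coefP_pos (hW0 : 0 < W0) (m : ℕ) : 0 < coefP ρ b W0 m :=
  coefP_pos_of_coefQ_nonneg ρ b W0 hρ hρsum hbpos hb hW0
    (coefQ_nonneg ρ b W0 hρ hρsum hbpos hb hW0 m)

theorem pieceDeriv_glue (c : Fin N) :
    pieceDeriv ρ b W0 c (b c) = pieceDeriv ρ b W0 (c + 1) (b c) := by
  rw [pieceDeriv, pieceDeriv, coefP_succ ρ b W0 c.isLt, coefQ_succ ρ b W0 c.isLt,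
    coefR_succ ρ c.isLt, coefS_succ ρ b c.isLt]
  exact (linFracDeriv_update _ _ (hbpos c).ne'
    (classW_mul_den ρ b W0 hρ hρsum hbpos hb c)).symm

theorem hasDerivAt_taggedW {a : ℝ} (ha : 0 < a) :
    HasDerivAt (taggedW ρ b W0) (pieceDeriv ρ b W0 (cutCount b (Iio a)) a) a := by
  have hpiece (m : ℕ) : HasDerivAt (piece ρ b W0 m) (pieceDeriv ρ b W0 m a) a :=
    hasDerivAt_linFrac _ _ _ _ ha.ne' (coefR_add_coefS_mul_pos ρ b hρ hρsum hbpos m ha.le).ne'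
  have hleft : taggedW ρ b W0 =ᶠ[𝓝[≤] a] piece ρ b W0 (cutCount b (Iio a)) := by
    have hev : ∀ᶠ x in 𝓝 a, 0 < x ∧ ∀ k, b k < a → b k < x :=
      (eventually_gt_nhds ha).and <| eventually_all.2 fun k =>
        eventually_imp_distrib_left.2 fun hk => eventually_gt_nhds hk
    filter_upwards [nhdsWithin_le_nhds hev, self_mem_nhdsWithin] with x ⟨hx, hk⟩ (hxa : x ≤ a)
    exact taggedW_eq_piece ρ b W0 hx (isLowerSet_Iio a) hb.monotone
      (fun k h => h.trans_le hxa) (fun k h => (hk k h).le)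
  have hright : taggedW ρ b W0 =ᶠ[𝓝[≥] a] piece ρ b W0 (cutCount b (Iic a)) := by
    have hev : ∀ᶠ x in 𝓝 a, 0 < x ∧ ∀ k, a < b k → x < b k :=
      (eventually_gt_nhds ha).and <| eventually_all.2 fun k =>
        eventually_imp_distrib_left.2 fun hk => eventually_lt_nhds hk
    filter_upwards [nhdsWithin_le_nhds hev, self_mem_nhdsWithin] with x ⟨hx, hk⟩ (hax : a ≤ x)
    exact taggedW_eq_piece ρ b W0 hx (isLowerSet_Iic a) hb.monotone
      (fun k h => not_lt.1 fun h' => lt_asymm h (hk k h')) (fun k h => le_trans h hax)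
  have hglue : pieceDeriv ρ b W0 (cutCount b (Iic a)) a
      = pieceDeriv ρ b W0 (cutCount b (Iio a)) a := by
    by_cases hc : ∃ c, b c = a
    · obtain ⟨c, rfl⟩ := hc
      rw [cutCount_Iic_apply hb, cutCount_Iio_apply hb]
      exact (pieceDeriv_glue ρ b W0 hρ hρsum hbpos hb c).symm
    · rw [cutCount_congr b (s' := Iio a) fun k => Ne.le_iff_lt fun h => hc ⟨k, h⟩]
  exact hasDerivAt_of_eventuallyEq_Iic_Ici (hpiece _) (hglue ▸ hpiece _) hleft hright

end Conservation

section Pieces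

variable (hρ : ∀ k, 0 < ρ k) (hρsum : ∑ k, ρ k < 1) (hbpos : ∀ k, 0 < b k)
  (hb : StrictMono b) (hW0 : 0 < W0) (hN : 0 < N)
include hρ hρsum hbpos hb hW0 hN

theorem coefQ_pos_or_coefS_pos (m : ℕ) : 0 < coefQ ρ b W0 m ∨ 0 < coefS ρ b m := by
  rcases (lowCut m).eq_empty_or_nonempty with h | hne
  · rw [coefS, h, Finset.compl_empty]
    exact Or.inr <| Finset.sum_pos (fun k _ => div_pos (hρ k) (hbpos k))
      ⟨⟨0, hN⟩, Finset.mem_univ _⟩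
  · exact Or.inl <| Finset.sum_pos (fun k _ => mul_pos (mul_pos (hρ k) (hbpos k))
      (classW_pos ρ b W0 (fun k => (hρ k).le) hρsum hbpos hb hW0 k)) hne

theorem pieceDeriv_neg (m : ℕ) {x : ℝ} (hx : 0 < x) : pieceDeriv ρ b W0 m x < 0 :=
  have hρ' := fun k => (hρ k).le
  linFracDeriv_neg (coefP_pos ρ b W0 hρ' hρsum hbpos hb hW0 m)
    (coefQ_nonneg ρ b W0 hρ' hρsum hbpos hb hW0 m) (coefR_pos ρ hρ' hρsum m)
    (coefS_nonneg ρ b hρ' hbpos m)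
    (coefQ_pos_or_coefS_pos ρ b W0 hρ hρsum hbpos hb hW0 hN m) hx

theorem pieceDeriv_strictMonoOn (m : ℕ) : StrictMonoOn (pieceDeriv ρ b W0 m) (Ioi 0) :=
  have hρ' := fun k => (hρ k).le
  linFracDeriv_strictMonoOn (coefP_pos ρ b W0 hρ' hρsum hbpos hb hW0 m)
    (coefQ_nonneg ρ b W0 hρ' hρsum hbpos hb hW0 m) (coefR_pos ρ hρ' hρsum m)
    (coefS_nonneg ρ b hρ' hbpos m)
    (coefQ_pos_or_coefS_pos ρ b W0 hρ hρsum hbpos hb hW0 hN m)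

end Pieces

end AccumulatingPriority

end

open AccumulatingPriority in
/-- The tagged waiting-time function `a ↦ W(a;b)` is strictly decreasing and
strictly convex on `(0,∞)`. -/
theorem taggedW_strictAnti_strictConvex (N : ℕ) (hN : 1 ≤ N)
    (ρ b : Fin N → ℝ) (W0 : ℝ)
    (hρ : ∀ k, 0 < ρ k) (hρsum : ∑ k, ρ k < 1) (hW0 : 0 < W0)
    (hbpos : ∀ k, 0 < b k) (hbmono : StrictMono b) :
    StrictAntiOn (taggedW ρ b W0) (Set.Ioi (0 : ℝ)) ∧
    StrictConvexOn ℝ (Set.Ioi (0 : ℝ)) (taggedW ρ b W0) := by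
  have hρ' : ∀ k, 0 ≤ ρ k := fun k => (hρ k).le
  have hderiv (x : ℝ) (hx : x ∈ Set.Ioi 0) :=
    hasDerivAt_taggedW ρ b W0 hρ' hρsum hbpos hbmono hx
  have hcont : ContinuousOn (taggedW ρ b W0) (Set.Ioi 0) := fun x hx =>
    (hderiv x hx).continuousAt.continuousWithinAt
  constructor
  · refine strictAntiOn_of_deriv_neg (convex_Ioi 0) hcont ?_
    rw [interior_Ioi]
    intro x hx
    rw [(hderiv x hx).deriv]
    exact pieceDeriv_neg ρ b W0 hρ hρsum hbpos hbmono hW0 hN _ hx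
  · refine StrictMonoOn.strictConvexOn_of_deriv (convex_Ioi 0) hcont ?_
    rw [interior_Ioi]
    exact (strictMonoOn_of_pieces hbmono ordConnected_Ioi
      (pieceDeriv_strictMonoOn ρ b W0 hρ hρsum hbpos hbmono hW0 hN)
      (pieceDeriv_glue ρ b W0 hρ' hρsum hbpos hbmono)).congr
      fun x hx => (hderiv x hx).deriv.symm
end

section
/- Let 0 < b_1 < b_2 < ⋯ < b_N be a strictly ordered bid profile and C_1,…,C_N > 0. If for each i = 1,…,N the bid b_i is a minimizer over a ∈ (0,∞) of the cost a ↦ C_i·W(a;b) + a, then the first-order equilibrium conditions hold: W_i = W̃_i(b) for every i = 1,…,N. -/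
/-- The first-order-condition quantity
`W̃_i(b) = (1 − Σ_{k≥i} ρ_k(1 − b_i/b_k) − (C_i/b_i²)·Σ_{k<i} ρ_k b_k W_k) / (C_i·Σ_{k≥i} ρ_k/b_k)`. -/
noncomputable def tildeW {N : ℕ} (ρ b C : Fin N → ℝ) (W0 : ℝ) (i : Fin N) : ℝ :=
  (1 - ∑ k : Fin N, (if i ≤ k then ρ k * (1 - b i / b k) else 0)
    - C i / (b i) ^ 2 * ∑ k : Fin N, (if k < i then ρ k * b k * classW ρ b W0 k else 0))
  / (C i * ∑ k : Fin N, (if i ≤ k then ρ k / b k else 0))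

/-!
Near `b i` the tagged waiting time `W(a; b)` is, on each side of `b i`, a quotient `N(a)/D(a)` of
smooth functions: to the left the classes `k < i` are served ahead of the tagged customer, to the
right the classes `k ≤ i`. Both quotients take the value `W_i` at `b i`, and whenever
`N(x) = w D(x)` one has `(N/D)'(x) = (N'(x) - w D'(x))/D(x)`. Moving class `i` across changes `N'`
by `-ρ_i W_i / b_i` and `D'` by `-ρ_i / b_i`, which cancel for `w = W_i`. Hence `W(·; b)` is
differentiable at `b i`, and minimality of `b i` for `C_i W(a; b) + a` forces the derivative to be
`-1/C_i`; solving this for `W_i` gives `W̃_i(b)`.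
-/

open Filter Topology Finset

theorem hasDerivAt_of_eventuallyEq_nhdsLE_nhdsGE {F : Type*} [NormedAddCommGroup F]
    [NormedSpace ℝ F] {f g h : ℝ → F} {f' : F} {x : ℝ} (hg : HasDerivAt g f' x)
    (hh : HasDerivAt h f' x) (hfg : f =ᶠ[𝓝[≤] x] g) (hfh : f =ᶠ[𝓝[≥] x] h) :
    HasDerivAt f f' x := by
  have hle := hg.hasDerivWithinAt.congr_of_eventuallyEq hfg (hfg.eq_of_nhdsWithin Set.self_mem_Iic)
  have hge := hh.hasDerivWithinAt.congr_of_eventuallyEq hfh (hfh.eq_of_nhdsWithin Set.self_mem_Ici)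
  simpa only [Set.Iic_union_Ici, hasDerivWithinAt_univ] using hle.union hge

theorem HasDerivAt.div_of_eq_mul {𝕜 : Type*} [NontriviallyNormedField 𝕜] {u v : 𝕜 → 𝕜}
    {u' v' x w : 𝕜} (hu : HasDerivAt u u' x) (hv : HasDerivAt v v' x) (hvx : v x ≠ 0)
    (hw : u x = w * v x) : HasDerivAt (fun a => u a / v a) ((u' - w * v') / v x) x := by
  refine (hu.div hv hvx).congr_deriv ?_
  rw [hw]
  field_simp

section TaggedCustomer

variable {N : ℕ} (ρ b : Fin N → ℝ) (W0 : ℝ)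

noncomputable def taggedNum (S : Finset (Fin N)) (a : ℝ) : ℝ :=
  W0 / (1 - ∑ k, ρ k) - ∑ k ∈ S, ρ k * (1 - b k / a) * classW ρ b W0 k

noncomputable def taggedDen (S : Finset (Fin N)) (a : ℝ) : ℝ :=
  1 - ∑ k ∈ S, ρ k * (1 - a / b k)

theorem taggedW_eq_div (a : ℝ) :
    taggedW ρ b W0 a = taggedNum ρ b W0 {k | b k < a} a / taggedDen ρ b {k | a ≤ b k} a := by
  simp only [taggedW, taggedNum, taggedDen, sum_filter]

-- The terms with `b k = a` vanish in both sums.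
theorem taggedW_eq_div_of_ne_zero {a : ℝ} (ha : a ≠ 0) :
    taggedW ρ b W0 a = taggedNum ρ b W0 {k | b k ≤ a} a / taggedDen ρ b {k | a < b k} a := by
  rw [taggedW_eq_div]
  congr 1
  · simp only [taggedNum, sum_filter]
    congr 1
    refine sum_congr rfl fun k _ => ?_
    rcases lt_trichotomy (b k) a with hk | rfl | hk
    · simp [hk, hk.le]
    · simp [ha]
    · simp [hk.not_gt, hk.not_ge]
  · simp only [taggedDen, sum_filter]
    congr 1
    refine sum_congr rfl fun k _ => ?_
    rcases lt_trichotomy (b k) a with hk | rfl | hk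
    · simp [hk.not_ge, hk.not_gt]
    · simp [ha]
    · simp [hk, hk.le]

theorem classW_eq_div (i : Fin N) :
    classW ρ b W0 i = taggedNum ρ b W0 (Iio i) (b i) / taggedDen ρ b (Ici i) (b i) := by
  rw [classW]
  simp only [dite_eq_ite, taggedNum, taggedDen, ← filter_gt_eq_Iio, ← filter_le_eq_Ici,
    sum_filter]

theorem tildeW_eq (C : Fin N → ℝ) (i : Fin N) :
    tildeW ρ b C W0 i = (taggedDen ρ b (Ici i) (b i)
      - C i / b i ^ 2 * ∑ k ∈ Iio i, ρ k * b k * classW ρ b W0 k)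
      / (C i * ∑ k ∈ Ici i, ρ k / b k) := by
  simp only [tildeW, taggedDen, ← filter_gt_eq_Iio, ← filter_le_eq_Ici, sum_filter]

theorem taggedNum_Iic_self {i : Fin N} (hbi : b i ≠ 0) :
    taggedNum ρ b W0 (Iic i) (b i) = taggedNum ρ b W0 (Iio i) (b i) := by
  simp [taggedNum, ← Iio_insert, hbi]

theorem taggedDen_Ioi_self {i : Fin N} (hbi : b i ≠ 0) :
    taggedDen ρ b (Ioi i) (b i) = taggedDen ρ b (Ici i) (b i) := by
  simp [taggedDen, ← Ioi_insert, hbi]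

theorem hasDerivAt_taggedNum (S : Finset (Fin N)) {x : ℝ} (hx : x ≠ 0) :
    HasDerivAt (taggedNum ρ b W0 S)
      (-(∑ k ∈ S, ρ k * b k * classW ρ b W0 k) / x ^ 2) x := by
  have hterm (k : Fin N) : HasDerivAt (fun a => ρ k * (1 - b k / a) * classW ρ b W0 k)
      (ρ k * b k * classW ρ b W0 k / x ^ 2) x := by
    have := (((hasDerivAt_const x (b k)).div (hasDerivAt_id x) hx).const_sub 1).const_mul (ρ k)
      |>.mul_const (classW ρ b W0 k)
    exact this.congr_deriv (by simp; ring)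
  exact ((HasDerivAt.fun_sum fun k _ => hterm k).const_sub _).congr_deriv
    (by rw [neg_div, sum_div])

theorem hasDerivAt_taggedDen (S : Finset (Fin N)) (x : ℝ) :
    HasDerivAt (taggedDen ρ b S) (∑ k ∈ S, ρ k / b k) x := by
  have hterm (k : Fin N) : HasDerivAt (fun a => ρ k * (1 - a / b k)) (-(ρ k / b k)) x :=
    ((((hasDerivAt_id x).div_const (b k)).const_sub 1).const_mul (ρ k)).congr_deriv (by simp; ring)
  exact ((HasDerivAt.fun_sum fun k _ => hterm k).const_sub _).congr_deriv (by simp)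

theorem taggedDen_pos (hρ : ∀ k, 0 ≤ ρ k) (hρsum : ∑ k, ρ k < 1) (hb : ∀ k, 0 < b k)
    (S : Finset (Fin N)) {a : ℝ} (ha : 0 ≤ a) : 0 < taggedDen ρ b S a := by
  have hle : ∑ k ∈ S, ρ k * (1 - a / b k) ≤ ∑ k, ρ k :=
    calc ∑ k ∈ S, ρ k * (1 - a / b k) ≤ ∑ k ∈ S, ρ k :=
          sum_le_sum fun k _ => mul_le_of_le_one_right (hρ k)
            (sub_le_self _ (div_nonneg ha (hb k).le))
      _ ≤ ∑ k, ρ k := sum_le_univ_sum_of_nonneg hρ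
  unfold taggedDen
  linarith

theorem taggedW_eventuallyEq_nhdsLE (hb : StrictMono b) (i : Fin N) :
    taggedW ρ b W0 =ᶠ[𝓝[≤] b i]
      fun a => taggedNum ρ b W0 (Iio i) a / taggedDen ρ b (Ici i) a := by
  have hlt : ∀ᶠ a in 𝓝 (b i), ∀ k ∈ Iio i, b k < a :=
    (eventually_all_finset _).2 fun k hk => eventually_gt_nhds (hb (mem_Iio.1 hk))
  filter_upwards [nhdsWithin_le_nhds hlt, self_mem_nhdsWithin] with a hlt hle
  have hiff (k : Fin N) : b k < a ↔ k < i :=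
    ⟨fun h => lt_of_not_ge fun hik => h.not_ge (hle.trans (hb.monotone hik)),
      fun h => hlt k (mem_Iio.2 h)⟩
  have hlow : ({k | b k < a} : Finset (Fin N)) = Iio i := by ext k; simp [hiff]
  have hhigh : ({k | a ≤ b k} : Finset (Fin N)) = Ici i := by
    ext k
    rw [mem_filter, mem_Ici, ← not_lt, hiff, not_lt]
    simp
  rw [taggedW_eq_div, hlow, hhigh]

theorem taggedW_eventuallyEq_nhdsGE (hb : StrictMono b) {i : Fin N} (hbi : 0 < b i) :
    taggedW ρ b W0 =ᶠ[𝓝[≥] b i]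
      fun a => taggedNum ρ b W0 (Iic i) a / taggedDen ρ b (Ioi i) a := by
  have hgt : ∀ᶠ a in 𝓝 (b i), ∀ k ∈ Ioi i, a < b k :=
    (eventually_all_finset _).2 fun k hk => eventually_lt_nhds (hb (mem_Ioi.1 hk))
  filter_upwards [nhdsWithin_le_nhds hgt, self_mem_nhdsWithin] with a hgt hge
  have hiff (k : Fin N) : a < b k ↔ i < k :=
    ⟨fun h => lt_of_not_ge fun hki => h.not_ge ((hb.monotone hki).trans hge),
      fun h => hgt k (mem_Ioi.2 h)⟩
  rw [taggedW_eq_div_of_ne_zero ρ b W0 (hbi.trans_le hge).ne']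
  have hlow : ({k | b k ≤ a} : Finset (Fin N)) = Iic i := by
    ext k
    rw [mem_filter, mem_Iic, ← not_lt, hiff, not_lt]
    simp
  have hhigh : ({k | a < b k} : Finset (Fin N)) = Ioi i := by ext k; simp [hiff]
  rw [hlow, hhigh]

theorem hasDerivAt_taggedW (hb : StrictMono b) {i : Fin N} (hbi : 0 < b i)
    (hD : taggedDen ρ b (Ici i) (b i) ≠ 0) :
    HasDerivAt (taggedW ρ b W0)
      ((-(∑ k ∈ Iio i, ρ k * b k * classW ρ b W0 k) / b i ^ 2
        - classW ρ b W0 i * ∑ k ∈ Ici i, ρ k / b k) / taggedDen ρ b (Ici i) (b i)) (b i) := by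
  have hW : taggedNum ρ b W0 (Iio i) (b i) = classW ρ b W0 i * taggedDen ρ b (Ici i) (b i) := by
    rw [classW_eq_div, div_mul_cancel₀ _ hD]
  have hL := (hasDerivAt_taggedNum ρ b W0 (Iio i) hbi.ne').div_of_eq_mul
    (hasDerivAt_taggedDen ρ b (Ici i) (b i)) hD hW
  have hR := (hasDerivAt_taggedNum ρ b W0 (Iic i) hbi.ne').div_of_eq_mul
    (hasDerivAt_taggedDen ρ b (Ioi i) (b i)) (by rwa [taggedDen_Ioi_self ρ b hbi.ne'])
    (by rw [taggedNum_Iic_self ρ b W0 hbi.ne', taggedDen_Ioi_self ρ b hbi.ne', hW])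
  refine hasDerivAt_of_eventuallyEq_nhdsLE_nhdsGE hL (hR.congr_deriv ?_)
    (taggedW_eventuallyEq_nhdsLE ρ b W0 hb i) (taggedW_eventuallyEq_nhdsGE ρ b W0 hb hbi)
  rw [taggedDen_Ioi_self ρ b hbi.ne', ← Iio_insert, ← Ioi_insert, sum_insert notMem_Iio_self,
    sum_insert notMem_Ioi_self]
  field_simp
  ring

end TaggedCustomer

theorem equilibrium_first_order_conditions_general (N : ℕ)
    (ρ b C : Fin N → ℝ) (W0 : ℝ)
    (hρ : ∀ k, 0 < ρ k) (hρsum : ∑ k, ρ k < 1)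
    (hbpos : ∀ k, 0 < b k) (hbmono : StrictMono b)
    (hC : ∀ i, 0 < C i)
    (hmin : ∀ i : Fin N, ∀ a : ℝ, 0 < a →
      C i * taggedW ρ b W0 (b i) + b i ≤ C i * taggedW ρ b W0 a + a) :
    ∀ i : Fin N, classW ρ b W0 i = tildeW ρ b C W0 i := by
  intro i
  have hD := taggedDen_pos ρ b (fun k => (hρ k).le) hρsum hbpos (Ici i) (hbpos i).le
  have hE : 0 < ∑ k ∈ Ici i, ρ k / b k :=
    sum_pos (fun k _ => div_pos (hρ k) (hbpos k)) nonempty_Ici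
  have hlocmin : IsLocalMin (fun a => C i * taggedW ρ b W0 a + a) (b i) :=
    mem_of_superset (Ioi_mem_nhds (hbpos i)) (hmin i)
  have hfoc := hlocmin.hasDerivAt_eq_zero
    (((hasDerivAt_taggedW ρ b W0 hbmono (hbpos i) hD.ne').const_mul (C i)).add (hasDerivAt_id _))
  rw [tildeW_eq, eq_div_iff (mul_pos (hC i) hE).ne']
  field_simp at hfoc
  linear_combination -hfoc

/-- If each class bid `b_i` of a strictly ordered positive profile minimizes the
class-`i` cost `a ↦ C_i·W(a;b) + a` over `(0,∞)`, then the first-order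
equilibrium conditions `W_i = W̃_i(b)` hold for every `i`. -/
theorem equilibrium_first_order_conditions (N : ℕ) (hN : 1 ≤ N)
    (ρ b C : Fin N → ℝ) (W0 : ℝ)
    (hρ : ∀ k, 0 < ρ k) (hρsum : ∑ k, ρ k < 1) (hW0 : 0 < W0)
    (hbpos : ∀ k, 0 < b k) (hbmono : StrictMono b)
    (hC : ∀ i, 0 < C i)
    (hmin : ∀ i : Fin N, ∀ a : ℝ, 0 < a →
      C i * taggedW ρ b W0 (b i) + b i ≤ C i * taggedW ρ b W0 a + a) :
    ∀ i : Fin N, classW ρ b W0 i = tildeW ρ b C W0 i :=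
  equilibrium_first_order_conditions_general N ρ b C W0 hρ hρsum hbpos hbmono hC hmin
end

section
/- Fix i ∈ {1,…,N} and fix the coordinates b_j for all j ≠ i of a strictly ordered bid profile. Then the map t ↦ W̃_i evaluated at the profile (b_1,…,b_{i−1}, t, b_{i+1},…,b_N), with the waiting times W_k recomputed from the perturbed profile, is monotone increasing in t on the interval (b_{i−1}, b_{i+1}), where b_0 := 0 and b_{N+1} := ∞. -/
namespace AccumulatingPriority

variable {N : ℕ}

theorem monotoneOn_mul_add_div_add {K a r : ℝ} (hK : 0 ≤ K) (ha : 0 ≤ a) (hr : 0 < r) :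
    MonotoneOn (fun x => x * (K + a * x) / (r + a * x)) (Set.Ioi 0) := by
  intro s (hs : 0 < s) t (ht : 0 < t) hst
  dsimp only
  rw [div_le_div_iff₀ (by positivity) (by positivity)]
  nlinarith [mul_nonneg (sub_nonneg.2 hst)
    (by positivity : 0 ≤ K * r + a * r * (s + t) + a ^ 2 * s * t)]

section PartialSums

variable (m : ℕ) (f g : Fin N → ℝ)

/-- Cutoffs are natural numbers so that `m = N`, the full sum, is allowed. -/
noncomputable def sumBelow : ℝ := ∑ k : Fin N, if (k : ℕ) < m then f k else 0

noncomputable def sumFrom : ℝ := ∑ k : Fin N, if m ≤ (k : ℕ) then f k else 0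

theorem sumBelow_zero : sumBelow 0 f = 0 := by simp [sumBelow]

theorem sumBelow_add_sumFrom : sumBelow m f + sumFrom m f = ∑ k, f k := by
  rw [sumBelow, sumFrom, ← Finset.sum_add_distrib]
  refine Finset.sum_congr rfl fun k _ => ?_
  split_ifs <;> first | omega | ring

theorem sumBelow_succ (j : Fin N) : sumBelow (j + 1) f = sumBelow j f + f j := by
  rw [sumBelow, sumBelow, ← Finset.add_sum_erase _ _ (Finset.mem_univ j),
    ← Finset.add_sum_erase _ _ (Finset.mem_univ j), if_pos j.val.lt_succ_self,
    if_neg (lt_irrefl _), add_comm, zero_add]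
  congr 1
  refine Finset.sum_congr rfl fun k hk => ?_
  have : (k : ℕ) ≠ j := Fin.val_ne_of_ne (Finset.ne_of_mem_erase hk)
  simp only [Nat.lt_succ_iff_lt_or_eq, this, or_false]

theorem sumFrom_eq_add_sumFrom_succ (j : Fin N) :
    sumFrom j f = f j + sumFrom (j + 1) f := by
  have h₁ := sumBelow_add_sumFrom j f
  have h₂ := sumBelow_add_sumFrom (j + 1) f
  rw [sumBelow_succ] at h₂
  linarith

variable {m f g}

theorem sumBelow_le_sumBelow (h : ∀ k : Fin N, (k : ℕ) < m → f k ≤ g k) :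
    sumBelow m f ≤ sumBelow m g :=
  Finset.sum_le_sum fun k _ => by split_ifs with hk <;> simp [h k, hk]

theorem sumFrom_le_sumFrom (h : ∀ k : Fin N, m ≤ (k : ℕ) → f k ≤ g k) :
    sumFrom m f ≤ sumFrom m g :=
  Finset.sum_le_sum fun k _ => by split_ifs with hk <;> simp [h k, hk]

theorem sumBelow_nonneg (h : ∀ k : Fin N, (k : ℕ) < m → 0 ≤ f k) : 0 ≤ sumBelow m f :=
  Finset.sum_nonneg fun k _ => by split_ifs with hk <;> simp [h k, hk]

theorem sumFrom_nonneg (h : ∀ k, 0 ≤ f k) : 0 ≤ sumFrom m f :=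
  Finset.sum_nonneg fun k _ => by split_ifs <;> simp [h k]

theorem sumFrom_le_sum (h : ∀ k, 0 ≤ f k) : sumFrom m f ≤ ∑ k, f k := by
  linarith [sumBelow_add_sumFrom m f, sumBelow_nonneg (m := m) fun k _ => h k]

theorem sumFrom_congr (h : ∀ k : Fin N, m ≤ (k : ℕ) → f k = g k) : sumFrom m f = sumFrom m g :=
  Finset.sum_congr rfl fun k _ => by split_ifs with hk <;> simp [h k, hk]

end PartialSums

theorem le_of_lowerTriangular {d w x y F G : Fin N → ℝ} (hd : ∀ j, 0 < d j) (hw : ∀ k, 0 ≤ w k)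
    (hx : ∀ j : Fin N, d j * x j = sumBelow j (fun k => w k * x k) + F j)
    (hy : ∀ j : Fin N, d j * y j = sumBelow j (fun k => w k * y k) + G j)
    (hFG : ∀ j, F j ≤ G j) (j : Fin N) : x j ≤ y j := by
  induction j using WellFoundedLT.induction with
  | _ j ih =>
    have hsum : sumBelow j (fun k => w k * x k) ≤ sumBelow j (fun k => w k * y k) :=
      sumBelow_le_sumBelow fun k hk => mul_le_mul_of_nonneg_left (ih k (Fin.lt_def.2 hk)) (hw k)
    refine le_of_mul_le_mul_left ?_ (hd j)
    linarith [hx j, hy j, hFG j]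

section Queue

variable (ρ b : Fin N → ℝ) (W0 : ℝ)

noncomputable def loadWaitBelow (m : ℕ) : ℝ := sumBelow m fun k => ρ k * classW ρ b W0 k

noncomputable def bidLoadWaitBelow (m : ℕ) : ℝ := sumBelow m fun k => ρ k * (b k * classW ρ b W0 k)

/-- The denominator of `classW ρ b W0 j`, divided by `b j`. -/
noncomputable def scaledDenom (j : Fin N) : ℝ :=
  (1 - sumFrom j ρ) / b j + sumFrom j fun k => ρ k / b k

theorem sum_ite_lt_eq_sumBelow (i : Fin N) (f : Fin N → ℝ) :
    (∑ k : Fin N, if k < i then f k else 0) = sumBelow i f := by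
  simp only [sumBelow, Fin.lt_def]

theorem sum_ite_le_eq_sumFrom (i : Fin N) (f : Fin N → ℝ) :
    (∑ k : Fin N, if i ≤ k then f k else 0) = sumFrom i f := by
  simp only [sumFrom, Fin.le_def]

theorem one_sub_sum_ite_le_eq (j : Fin N) :
    1 - (∑ k : Fin N, if j ≤ k then ρ k * (1 - b j / b k) else 0)
      = 1 - sumFrom j ρ + b j * sumFrom j (fun k => ρ k / b k) := by
  have : sumFrom j (fun k => ρ k * (1 - b j / b k))
      = sumFrom j ρ - b j * sumFrom j (fun k => ρ k / b k) := by
    simp only [sumFrom, Finset.mul_sum, ← Finset.sum_sub_distrib]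
    exact Finset.sum_congr rfl fun k _ => by split_ifs <;> ring
  rw [sum_ite_le_eq_sumFrom, this]
  ring

variable {ρ b W0}

theorem one_sub_sumFrom_pos (hρ : ∀ k, 0 ≤ ρ k) (hρsum : ∑ k, ρ k < 1) (m : ℕ) :
    0 < 1 - sumFrom m ρ := by
  linarith [sumFrom_le_sum (m := m) hρ]

theorem scaledDenom_pos (hρ : ∀ k, 0 ≤ ρ k) (hρsum : ∑ k, ρ k < 1) (hb : ∀ k, 0 < b k)
    (j : Fin N) : 0 < scaledDenom ρ b j :=
  add_pos_of_pos_of_nonneg (div_pos (one_sub_sumFrom_pos hρ hρsum j) (hb j))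
    (sumFrom_nonneg fun k => div_nonneg (hρ k) (hb k).le)

theorem scaledDenom_antitone {p q : Fin N → ℝ} (hρ : ∀ k, 0 ≤ ρ k) (hρsum : ∑ k, ρ k < 1)
    (hp : ∀ k, 0 < p k) (hpq : p ≤ q) (j : Fin N) : scaledDenom ρ q j ≤ scaledDenom ρ p j :=
  add_le_add (div_le_div_of_nonneg_left (one_sub_sumFrom_pos hρ hρsum j).le (hp j) (hpq j))
    (sumFrom_le_sumFrom fun k _ => div_le_div_of_nonneg_left (hρ k) (hp k) (hpq k))

theorem scaled_classW_mul_scaledDenom (hρ : ∀ k, 0 ≤ ρ k) (hρsum : ∑ k, ρ k < 1)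
    (hb : ∀ k, 0 < b k) (j : Fin N) :
    b j * classW ρ b W0 j * scaledDenom ρ b j
      = W0 / (1 - ∑ k, ρ k) - loadWaitBelow ρ b W0 j + bidLoadWaitBelow ρ b W0 j / b j := by
  have hnum : (∑ k : Fin N, if h : k < j then ρ k * (1 - b k / b j) * classW ρ b W0 k else 0)
      = loadWaitBelow ρ b W0 j - bidLoadWaitBelow ρ b W0 j / b j := by
    simp only [dite_eq_ite, sum_ite_lt_eq_sumBelow, loadWaitBelow, bidLoadWaitBelow, sumBelow,
      Finset.sum_div, ← Finset.sum_sub_distrib]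
    exact Finset.sum_congr rfl fun k _ => by split_ifs <;> ring
  have hden : 0 < 1 - sumFrom j ρ + b j * sumFrom j fun k => ρ k / b k :=
    add_pos_of_pos_of_nonneg (one_sub_sumFrom_pos hρ hρsum j)
      (mul_nonneg (hb j).le (sumFrom_nonneg fun k => div_nonneg (hρ k) (hb k).le))
  have hbj := (hb j).ne'
  rw [classW, hnum, one_sub_sum_ite_le_eq, scaledDenom]
  field_simp
  ring

theorem partial_conservation (hρ : ∀ k, 0 ≤ ρ k) (hρsum : ∑ k, ρ k < 1) (hb : ∀ k, 0 < b k)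
    (m : ℕ) (hm : m ≤ N) :
    (1 - sumFrom m ρ) * loadWaitBelow ρ b W0 m
        + (sumFrom m fun k => ρ k / b k) * bidLoadWaitBelow ρ b W0 m
      = W0 / (1 - ∑ k, ρ k) * sumBelow m ρ := by
  induction m with
  | zero => simp [loadWaitBelow, bidLoadWaitBelow, sumBelow_zero]
  | succ m ih =>
    set j : Fin N := ⟨m, hm⟩
    set W := classW ρ b W0 j
    have hA : loadWaitBelow ρ b W0 (m + 1) = loadWaitBelow ρ b W0 m + ρ j * W :=
      sumBelow_succ _ j
    have hS : bidLoadWaitBelow ρ b W0 (m + 1) = bidLoadWaitBelow ρ b W0 m + ρ j * (b j * W) :=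
      sumBelow_succ _ j
    have hB : sumBelow (m + 1) ρ = sumBelow m ρ + ρ j := sumBelow_succ _ j
    have hg : sumFrom m ρ = ρ j + sumFrom (m + 1) ρ := sumFrom_eq_add_sumFrom_succ _ j
    have hμ : (sumFrom m fun k => ρ k / b k) = ρ j / b j + sumFrom (m + 1) fun k => ρ k / b k :=
      sumFrom_eq_add_sumFrom_succ _ j
    have hrec : b j * W * scaledDenom ρ b j
        = W0 / (1 - ∑ k, ρ k) - loadWaitBelow ρ b W0 m + bidLoadWaitBelow ρ b W0 m / b j :=
      scaled_classW_mul_scaledDenom hρ hρsum hb j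
    rw [scaledDenom] at hrec
    rw [hA, hS, hB]
    linear_combination ih (by omega) + ρ j * hrec
      - ρ j * W * (1 - sumFrom m ρ + ρ j) * mul_inv_cancel₀ (hb j).ne'
      + (loadWaitBelow ρ b W0 m + ρ j * W) * hg
      - (bidLoadWaitBelow ρ b W0 m + ρ j * (b j * W)) * hμ

theorem one_sub_sumFrom_mul_scaled_classW (hρ : ∀ k, 0 ≤ ρ k) (hρsum : ∑ k, ρ k < 1)
    (hb : ∀ k, 0 < b k) (j : Fin N) :
    (1 - sumFrom j ρ) * (b j * classW ρ b W0 j)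
      = bidLoadWaitBelow ρ b W0 j + W0 / scaledDenom ρ b j := by
  have hE := scaledDenom_pos hρ hρsum hb j
  have hc : W0 / (1 - ∑ k, ρ k) * (1 - ∑ k, ρ k) = W0 := div_mul_cancel₀ _ (by linarith)
  have hrec := scaled_classW_mul_scaledDenom (W0 := W0) hρ hρsum hb j
  rw [← sub_eq_iff_eq_add', eq_div_iff hE.ne']
  unfold scaledDenom at hrec ⊢
  linear_combination (1 - sumFrom j ρ) * hrec
    - partial_conservation (W0 := W0) hρ hρsum hb j j.isLt.le
    - W0 / (1 - ∑ k, ρ k) * sumBelow_add_sumFrom j ρ + hc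

theorem scaled_classW_nonneg (hρ : ∀ k, 0 ≤ ρ k) (hρsum : ∑ k, ρ k < 1) (hb : ∀ k, 0 < b k)
    (hW0 : 0 ≤ W0) (j : Fin N) : 0 ≤ b j * classW ρ b W0 j :=
  le_of_lowerTriangular (x := 0) (F := 0) (fun j => one_sub_sumFrom_pos hρ hρsum j) hρ
    (fun j => by simp [sumBelow]) (fun j => one_sub_sumFrom_mul_scaled_classW hρ hρsum hb j)
    (fun j => div_nonneg hW0 (scaledDenom_pos hρ hρsum hb j).le) j

theorem bidLoadWaitBelow_nonneg (hρ : ∀ k, 0 ≤ ρ k) (hρsum : ∑ k, ρ k < 1)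
    (hb : ∀ k, 0 < b k) (hW0 : 0 ≤ W0) (m : ℕ) : 0 ≤ bidLoadWaitBelow ρ b W0 m :=
  sumBelow_nonneg fun k _ => mul_nonneg (hρ k) (scaled_classW_nonneg hρ hρsum hb hW0 k)

theorem scaled_classW_le_of_le {p q : Fin N → ℝ} (hρ : ∀ k, 0 ≤ ρ k) (hρsum : ∑ k, ρ k < 1)
    (hp : ∀ k, 0 < p k) (hpq : p ≤ q) (hW0 : 0 ≤ W0) (j : Fin N) :
    p j * classW ρ p W0 j ≤ q j * classW ρ q W0 j := by
  have hq k : 0 < q k := (hp k).trans_le (hpq k)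
  exact le_of_lowerTriangular (fun j => one_sub_sumFrom_pos hρ hρsum j) hρ
    (fun j => one_sub_sumFrom_mul_scaled_classW hρ hρsum hp j)
    (fun j => one_sub_sumFrom_mul_scaled_classW hρ hρsum hq j)
    (fun j => div_le_div_of_nonneg_left hW0 (scaledDenom_pos hρ hρsum hq j)
      (scaledDenom_antitone hρ hρsum hp hpq j)) j

end Queue

section Perturbation

open Function

variable {ρ b : Fin N → ℝ} {W0 : ℝ} {i : Fin N}

theorem update_pos (hb : ∀ k, 0 < b k) {x : ℝ} (hx : 0 < x) (k : Fin N) : 0 < update b i x k := by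
  rcases eq_or_ne k i with rfl | hk
  · rwa [update_self]
  · rw [update_of_ne hk]
    exact hb k

theorem sumFrom_div_update (x : ℝ) :
    (sumFrom i fun k => ρ k / update b i x k) = ρ i / x + sumFrom (i + 1) fun k => ρ k / b k := by
  rw [sumFrom_eq_add_sumFrom_succ, update_self]
  congr 1
  exact sumFrom_congr fun k hk => by rw [update_of_ne (Fin.ne_of_val_ne (by omega))]

theorem bidLoadWaitBelow_update_div_le (hρ : ∀ k, 0 ≤ ρ k) (hρi : 0 < ρ i)
    (hρsum : ∑ k, ρ k < 1) (hb : ∀ k, 0 < b k) (hW0 : 0 ≤ W0) {s t : ℝ} (hs : 0 < s)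
    (hst : s ≤ t) :
    bidLoadWaitBelow ρ (update b i t) W0 i / t ≤ bidLoadWaitBelow ρ (update b i s) W0 i / s := by
  have hp := update_pos hb hs (i := i)
  have hq := update_pos hb (hs.trans_le hst) (i := i)
  have hV := scaled_classW_le_of_le hρ hρsum hp (update_le_update_iff'.2 hst) hW0
  have hcons_s := partial_conservation (W0 := W0) hρ hρsum hp i i.isLt.le
  have hcons_t := partial_conservation (W0 := W0) hρ hρsum hq i i.isLt.le
  rw [sumFrom_div_update] at hcons_s hcons_t
  set a := sumFrom (i + 1) fun k => ρ k / b k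
  set Sp := bidLoadWaitBelow ρ (update b i s) W0 i
  set Sq := bidLoadWaitBelow ρ (update b i t) W0 i
  set Ap := loadWaitBelow ρ (update b i s) W0 i
  set Aq := loadWaitBelow ρ (update b i t) W0 i
  have hA : Ap ≤ Aq := sumBelow_le_sumBelow fun k hk => by
    have hVk := hV k
    rw [update_of_ne (Fin.ne_of_lt (Fin.lt_def.2 hk)),
      update_of_ne (Fin.ne_of_lt (Fin.lt_def.2 hk))] at hVk
    exact mul_le_mul_of_nonneg_left (le_of_mul_le_mul_left hVk (hb k)) (hρ k)
  have hS : Sp ≤ Sq := sumBelow_le_sumBelow fun k _ => mul_le_mul_of_nonneg_left (hV k) (hρ k)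
  have hdiff : ρ i * (Sp / s) - ρ i * (Sq / t)
      = (1 - sumFrom i ρ) * (Aq - Ap) + a * (Sq - Sp) := by
    linear_combination hcons_s - hcons_t
  have ha : 0 ≤ a := sumFrom_nonneg fun k => div_nonneg (hρ k) (hb k).le
  refine le_of_mul_le_mul_left ?_ hρi
  linarith [mul_nonneg (one_sub_sumFrom_pos hρ hρsum i).le (sub_nonneg.2 hA),
    mul_nonneg ha (sub_nonneg.2 hS)]

theorem tildeW_update_eq {C : Fin N → ℝ} (hρ : ∀ k, 0 ≤ ρ k) (hρi : 0 < ρ i)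
    (hb : ∀ k, 0 < b k) (hC : C i ≠ 0) {x : ℝ} (hx : 0 < x) :
    tildeW ρ (update b i x) C W0 i
      = x * (1 - sumFrom (i + 1) ρ + (sumFrom (i + 1) fun k => ρ k / b k) * x)
            / (ρ i + (sumFrom (i + 1) fun k => ρ k / b k) * x) / C i
        - bidLoadWaitBelow ρ (update b i x) W0 i / x
            / (ρ i + (sumFrom (i + 1) fun k => ρ k / b k) * x) := by
  have hS : (∑ k, if k < i then ρ k * update b i x k * classW ρ (update b i x) W0 k else 0)
      = bidLoadWaitBelow ρ (update b i x) W0 i := by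
    simp only [sum_ite_lt_eq_sumBelow, bidLoadWaitBelow, mul_assoc]
  have hden : 0 < ρ i + (sumFrom (i + 1) fun k => ρ k / b k) * x :=
    add_pos_of_pos_of_nonneg hρi
      (mul_nonneg (sumFrom_nonneg fun k => div_nonneg (hρ k) (hb k).le) hx.le)
  rw [tildeW, one_sub_sum_ite_le_eq, hS, sum_ite_le_eq_sumFrom, sumFrom_div_update, update_self,
    sumFrom_eq_add_sumFrom_succ ρ i]
  field_simp
  ring

end Perturbation

end AccumulatingPriority

open AccumulatingPriority

theorem tildeW_monotone_in_own_bid_general (N : ℕ)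
    (ρ b C : Fin N → ℝ) (W0 : ℝ) (i : Fin N)
    (hρ : ∀ k, 0 < ρ k) (hρsum : ∑ k, ρ k < 1) (hW0 : 0 < W0)
    (hbpos : ∀ k, 0 < b k) (hC : ∀ k, 0 < C k) :
    ∀ s t : ℝ, 0 < s → (∀ j : Fin N, j < i → b j < s) →
      (∀ j : Fin N, i < j → t < b j) → s ≤ t →
      tildeW ρ (Function.update b i s) C W0 i ≤
        tildeW ρ (Function.update b i t) C W0 i := by
  intro s t hs _ _ hst
  have ht := hs.trans_le hst
  have hρ' k : 0 ≤ ρ k := (hρ k).le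
  have ha : 0 ≤ sumFrom (i + 1) fun k => ρ k / b k :=
    sumFrom_nonneg fun k => div_nonneg (hρ' k) (hbpos k).le
  rw [tildeW_update_eq hρ' (hρ i) hbpos (hC i).ne' hs,
    tildeW_update_eq hρ' (hρ i) hbpos (hC i).ne' ht]
  refine sub_le_sub (div_le_div_of_nonneg_right ?_ (hC i).le) (div_le_div₀ ?_ ?_ ?_ ?_)
  · exact monotoneOn_mul_add_div_add (one_sub_sumFrom_pos hρ' hρsum _).le ha (hρ i) hs ht hst
  · exact div_nonneg (bidLoadWaitBelow_nonneg hρ' hρsum (update_pos hbpos hs) hW0.le i) hs.le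
  · exact bidLoadWaitBelow_update_div_le hρ' (hρ i) hρsum hbpos hW0.le hs hst
  · exact add_pos_of_pos_of_nonneg (hρ i) (mul_nonneg ha hs.le)
  · gcongr

/-- Perturbing the `i`-th coordinate of a strictly ordered positive bid profile
within the interval `(b_{i-1}, b_{i+1})` (with `b_0 := 0`, `b_{N+1} := ∞`),
the quantity `W̃_i`, recomputed from the perturbed profile, is monotone
increasing in the perturbed bid. Membership of `s ≤ t` in the interval is
expressed by `0 < s`, `b j < s` for all `j < i`, and `t < b j` for all `j > i`. -/
theorem tildeW_monotone_in_own_bid (N : ℕ) (hN : 1 ≤ N)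
    (ρ b C : Fin N → ℝ) (W0 : ℝ) (i : Fin N)
    (hρ : ∀ k, 0 < ρ k) (hρsum : ∑ k, ρ k < 1) (hW0 : 0 < W0)
    (hbpos : ∀ k, 0 < b k) (hbmono : StrictMono b) (hC : ∀ k, 0 < C k) :
    ∀ s t : ℝ, 0 < s → (∀ j : Fin N, j < i → b j < s) →
      (∀ j : Fin N, i < j → t < b j) → s ≤ t →
      tildeW ρ (Function.update b i s) C W0 i ≤
        tildeW ρ (Function.update b i t) C W0 i :=
  tildeW_monotone_in_own_bid_general N ρ b C W0 i hρ hρsum hW0 hbpos hC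
end

section
/- Fix i, j ∈ {1,…,N} with j < i and fix all coordinates of a strictly ordered bid profile except b_j. Then the map t ↦ W̃_i evaluated at the profile with b_j replaced by t, with the waiting times W_k recomputed from the perturbed profile, is monotone decreasing in t on the interval (b_{j−1}, b_{j+1}), where b_0 := 0. -/
namespace APQAux

variable {N : ℕ}

/-- `F_n = Σ_{k<n} ρ_k W_k`. -/
noncomputable def Fq (ρ b : Fin N → ℝ) (W0 : ℝ) (n : ℕ) : ℝ :=
  ∑ k : Fin N, if (k : ℕ) < n then ρ k * classW ρ b W0 k else 0

/-- `S_n = Σ_{k<n} ρ_k b_k W_k`. -/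
noncomputable def Sq (ρ b : Fin N → ℝ) (W0 : ℝ) (n : ℕ) : ℝ :=
  ∑ k : Fin N, if (k : ℕ) < n then ρ k * b k * classW ρ b W0 k else 0

/-- `R_n = Σ_{m≥n} ρ_m`. -/
noncomputable def Rq (ρ : Fin N → ℝ) (n : ℕ) : ℝ :=
  ∑ m : Fin N, if n ≤ (m : ℕ) then ρ m else 0

/-- `T_n = Σ_{m≥n} ρ_m/b_m`. -/
noncomputable def Tq (ρ b : Fin N → ℝ) (n : ℕ) : ℝ :=
  ∑ m : Fin N, if n ≤ (m : ℕ) then ρ m / b m else 0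

/-- `P_n = Σ_{k<n} ρ_k`. -/
noncomputable def Pq (ρ : Fin N → ℝ) (n : ℕ) : ℝ :=
  ∑ k : Fin N, if (k : ℕ) < n then ρ k else 0

/-- `D_i = 1 − Σ_{m≥i} ρ_m (1 − b_i/b_m)`, the denominator in Kleinrock's recursion. -/
noncomputable def Dq (ρ b : Fin N → ℝ) (i : Fin N) : ℝ :=
  1 - ∑ m : Fin N, if i ≤ m then ρ m * (1 - b i / b m) else 0

lemma sum_if_lt_succ (g : Fin N → ℝ) (i : Fin N) :
    (∑ k : Fin N, if (k : ℕ) < (i : ℕ) + 1 then g k else 0)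
      = (∑ k : Fin N, if (k : ℕ) < (i : ℕ) then g k else 0) + g i := by
  have h : ∀ k : Fin N,
      (if (k : ℕ) < (i : ℕ) + 1 then g k else 0)
        = (if (k : ℕ) < (i : ℕ) then g k else 0) + (if k = i then g k else 0) := by
    intro k
    by_cases h1 : k = i
    · subst h1; simp
    · have h2 : (k : ℕ) ≠ (i : ℕ) := fun hc => h1 (Fin.ext hc)
      by_cases h3 : (k : ℕ) < (i : ℕ)
      · have h4 : (k : ℕ) < (i : ℕ) + 1 := by omega
        simp [h1, h3, h4]
      · have h4 : ¬ (k : ℕ) < (i : ℕ) + 1 := by omega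
        simp [h1, h3, h4]
  rw [Finset.sum_congr rfl fun k _ => h k, Finset.sum_add_distrib,
    Finset.sum_ite_eq' Finset.univ i g]
  simp

lemma sum_if_le_succ (g : Fin N → ℝ) (i : Fin N) :
    (∑ k : Fin N, if (i : ℕ) ≤ (k : ℕ) then g k else 0)
      = (∑ k : Fin N, if (i : ℕ) + 1 ≤ (k : ℕ) then g k else 0) + g i := by
  have h : ∀ k : Fin N,
      (if (i : ℕ) ≤ (k : ℕ) then g k else 0)
        = (if (i : ℕ) + 1 ≤ (k : ℕ) then g k else 0) + (if k = i then g k else 0) := by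
    intro k
    by_cases h1 : k = i
    · subst h1; simp
    · have h2 : (k : ℕ) ≠ (i : ℕ) := fun hc => h1 (Fin.ext hc)
      by_cases h3 : (i : ℕ) + 1 ≤ (k : ℕ)
      · have h4 : (i : ℕ) ≤ (k : ℕ) := by omega
        simp [h1, h3, h4]
      · by_cases h5 : (i : ℕ) ≤ (k : ℕ)
        · omega
        · simp [h1, h3, h5]
  rw [Finset.sum_congr rfl fun k _ => h k, Finset.sum_add_distrib,
    Finset.sum_ite_eq' Finset.univ i g]
  simp

lemma Rq_add_Pq (ρ : Fin N → ℝ) (n : ℕ) : Rq ρ n + Pq ρ n = ∑ k, ρ k := by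
  unfold Rq Pq
  rw [← Finset.sum_add_distrib]
  apply Finset.sum_congr rfl
  intro k _
  by_cases h : n ≤ (k : ℕ)
  · have h2 : ¬ (k : ℕ) < n := by omega
    simp [h, h2]
  · have h2 : (k : ℕ) < n := by omega
    simp [h, h2]

lemma Dq_eq (ρ b : Fin N → ℝ) (i : Fin N) :
    Dq ρ b i = 1 - Rq ρ (i : ℕ) + b i * Tq ρ b (i : ℕ) := by
  have h : ∀ m : Fin N,
      (if i ≤ m then ρ m * (1 - b i / b m) else 0)
        = (if (i : ℕ) ≤ (m : ℕ) then ρ m else 0)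
          - b i * (if (i : ℕ) ≤ (m : ℕ) then ρ m / b m else 0) := by
    intro m
    by_cases h1 : (i : ℕ) ≤ (m : ℕ)
    · have h2 : i ≤ m := h1
      simp only [h1, h2, if_pos]
      ring
    · have h2 : ¬ i ≤ m := h1
      simp [h1, h2]
  unfold Dq
  rw [Finset.sum_congr rfl fun m _ => h m, Finset.sum_sub_distrib, ← Finset.mul_sum]
  unfold Rq Tq
  ring

lemma sigma_pos (ρ : Fin N → ℝ) (hρ : ∀ k, 0 < ρ k) (hsum : ∑ k, ρ k < 1)
    (n : ℕ) : 0 < 1 - Rq ρ n := by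
  have h1 : Rq ρ n ≤ ∑ k, ρ k := by
    apply Finset.sum_le_sum
    intro k _
    by_cases h : n ≤ (k : ℕ)
    · simp [h]
    · simp [h]; exact (hρ k).le
  linarith

lemma Tq_nonneg (ρ b : Fin N → ℝ) (hρ : ∀ k, 0 < ρ k) (hb : ∀ k, 0 < b k)
    (n : ℕ) : 0 ≤ Tq ρ b n := by
  apply Finset.sum_nonneg
  intro m _
  by_cases h : n ≤ (m : ℕ)
  · simp only [h, if_pos]
    exact (div_nonneg (hρ m).le (hb m).le)
  · simp [h]

lemma Dq_pos (ρ b : Fin N → ℝ) (hρ : ∀ k, 0 < ρ k) (hb : ∀ k, 0 < b k)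
    (hsum : ∑ k, ρ k < 1) (i : Fin N) : 0 < Dq ρ b i := by
  rw [Dq_eq]
  have h1 := sigma_pos ρ hρ hsum (i : ℕ)
  have h2 : 0 ≤ b i * Tq ρ b (i : ℕ) := mul_nonneg (hb i).le (Tq_nonneg ρ b hρ hb (i : ℕ))
  linarith

lemma classW_key (ρ b : Fin N → ℝ) (W0 : ℝ) (hρ : ∀ k, 0 < ρ k) (hb : ∀ k, 0 < b k)
    (hsum : ∑ k, ρ k < 1) (i : Fin N) :
    classW ρ b W0 i * Dq ρ b i
      = W0 / (1 - ∑ k, ρ k) - Fq ρ b W0 (i : ℕ) + Sq ρ b W0 (i : ℕ) / b i := by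
  have hsum_eq : (∑ k : Fin N, if h : k < i then ρ k * (1 - b k / b i) * classW ρ b W0 k else 0)
      = Fq ρ b W0 (i : ℕ) - Sq ρ b W0 (i : ℕ) / b i := by
    unfold Fq Sq
    rw [Finset.sum_div, ← Finset.sum_sub_distrib]
    apply Finset.sum_congr rfl
    intro k _
    by_cases h1 : k < i
    · have h2 : (k : ℕ) < (i : ℕ) := h1
      simp only [h1, h2, dif_pos, if_pos]
      ring
    · have h2 : ¬ (k : ℕ) < (i : ℕ) := h1
      simp [h1, h2]
  have hD : (1 - ∑ k : Fin N, if i ≤ k then ρ k * (1 - b i / b k) else 0) = Dq ρ b i := rfl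
  rw [classW, hsum_eq, hD, div_mul_cancel₀ _ (Dq_pos ρ b hρ hb hsum i).ne']
  ring

lemma lambdaId (ρ b : Fin N → ℝ) (W0 : ℝ) (hρ : ∀ k, 0 < ρ k) (hb : ∀ k, 0 < b k)
    (hsum : ∑ k, ρ k < 1) : ∀ n : ℕ, n ≤ N →
    (1 - Rq ρ n) * Fq ρ b W0 n + Tq ρ b n * Sq ρ b W0 n
      = W0 / (1 - ∑ k, ρ k) * Pq ρ n := by
  intro n
  induction n with
  | zero => intro _; simp [Fq, Sq, Pq]
  | succ n ih =>
    intro hn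
    have hnN : n < N := hn
    set i : Fin N := ⟨n, hnN⟩ with hidef
    have hF : Fq ρ b W0 (n + 1) = Fq ρ b W0 n + ρ i * classW ρ b W0 i := by
      unfold Fq; exact sum_if_lt_succ (fun k => ρ k * classW ρ b W0 k) i
    have hS : Sq ρ b W0 (n + 1) = Sq ρ b W0 n + ρ i * b i * classW ρ b W0 i := by
      unfold Sq; exact sum_if_lt_succ (fun k => ρ k * b k * classW ρ b W0 k) i
    have hP : Pq ρ (n + 1) = Pq ρ n + ρ i := by
      unfold Pq; exact sum_if_lt_succ (fun k => ρ k) i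
    have hR : Rq ρ n = Rq ρ (n + 1) + ρ i := by
      unfold Rq; exact sum_if_le_succ (fun k => ρ k) i
    have hT : Tq ρ b n = Tq ρ b (n + 1) + ρ i / b i := by
      unfold Tq; exact sum_if_le_succ (fun k => ρ k / b k) i
    have key := classW_key ρ b W0 hρ hb hsum i
    have hDt : Dq ρ b i = 1 - Rq ρ (n + 1) + b i * Tq ρ b (n + 1) := by
      rw [Dq_eq]
      show 1 - Rq ρ n + b i * Tq ρ b n = _
      rw [hR, hT]
      have hbb : b i * (ρ i / b i) = ρ i := mul_div_cancel₀ _ (hb i).ne'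
      linear_combination hbb
    rw [hDt] at key
    rw [hF, hS, hP]
    linear_combination ih (le_of_lt hnN) - Sq ρ b W0 n * hT + Fq ρ b W0 n * hR
      + ρ i * key

lemma stepS (ρ b : Fin N → ℝ) (W0 : ℝ) (hρ : ∀ k, 0 < ρ k) (hb : ∀ k, 0 < b k)
    (hsum : ∑ k, ρ k < 1) (i : Fin N) :
    (1 - Rq ρ (i : ℕ)) * Dq ρ b i * Sq ρ b W0 ((i : ℕ) + 1)
      = ρ i * b i * W0 + (1 - Rq ρ ((i : ℕ) + 1)) * Dq ρ b i * Sq ρ b W0 (i : ℕ) := by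
  set n := (i : ℕ) with hn
  have h1 : Sq ρ b W0 (n + 1) = Sq ρ b W0 n + ρ i * b i * classW ρ b W0 i := by
    unfold Sq; exact sum_if_lt_succ (fun k => ρ k * b k * classW ρ b W0 k) i
  have h2 := classW_key ρ b W0 hρ hb hsum i
  have h4 : Rq ρ n = Rq ρ (n + 1) + ρ i := by
    unfold Rq; exact sum_if_le_succ (fun k => ρ k) i
  have h5 : Tq ρ b n = Tq ρ b (n + 1) + ρ i / b i := by
    unfold Tq; exact sum_if_le_succ (fun k => ρ k / b k) i
  have h3 : Dq ρ b i = 1 - Rq ρ (n + 1) + b i * Tq ρ b (n + 1) := by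
    rw [Dq_eq]
    show 1 - Rq ρ n + b i * Tq ρ b n = _
    rw [h4, h5]
    have hbb : b i * (ρ i / b i) = ρ i := mul_div_cancel₀ _ (hb i).ne'
    linear_combination hbb
  have h6 := lambdaId ρ b W0 hρ hb hsum n (le_of_lt i.isLt)
  have h7 := Rq_add_Pq ρ n
  have h8 : W0 / (1 - ∑ k, ρ k) * (1 - ∑ k, ρ k) = W0 :=
    div_mul_cancel₀ _ (by linarith : (1 : ℝ) - ∑ k, ρ k ≠ 0)
  have h9 : b i * (b i)⁻¹ = 1 := mul_inv_cancel₀ (hb i).ne'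
  rw [h1]
  linear_combination (ρ i * b i * (1 - Rq ρ n)) * h2 + (-(ρ i * Sq ρ b W0 n)) * h3
    + (-(Dq ρ b i * Sq ρ b W0 n) - ρ i * Sq ρ b W0 n) * h4
    + (ρ i * b i * Sq ρ b W0 n) * h5 + (-(ρ i * b i)) * h6
    + (-(ρ i * b i * (W0 / (1 - ∑ k, ρ k)))) * h7 + (ρ i * b i) * h8
    + (ρ i * Sq ρ b W0 n * (1 - Rq ρ n + ρ i)) * h9

lemma Scmp (ρ bs bt : Fin N → ℝ) (W0 : ℝ)
    (hρ : ∀ k, 0 < ρ k) (hsum : ∑ k, ρ k < 1) (hW0 : 0 ≤ W0)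
    (hbs : ∀ k, 0 < bs k) (hble : ∀ k, bs k ≤ bt k) :
    ∀ n : ℕ, n ≤ N → Sq ρ bs W0 n ≤ Sq ρ bt W0 n := by
  have hbt : ∀ k, 0 < bt k := fun k => lt_of_lt_of_le (hbs k) (hble k)
  intro n
  induction n with
  | zero => intro _; simp [Sq]
  | succ n ih =>
    intro hn
    have hnN : n < N := hn
    set i : Fin N := ⟨n, hnN⟩ with hidef
    have e_s := stepS ρ bs W0 hρ hbs hsum i
    have e_t := stepS ρ bt W0 hρ hbt hsum i
    have hσ := sigma_pos ρ hρ hsum n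
    have hσ' := sigma_pos ρ hρ hsum (n + 1)
    have hDs := Dq_pos ρ bs hρ hbs hsum i
    have hDt := Dq_pos ρ bt hρ hbt hsum i
    have hTle : Tq ρ bt n ≤ Tq ρ bs n := by
      apply Finset.sum_le_sum
      intro m _
      by_cases h : n ≤ (m : ℕ)
      · simp only [h, if_pos]
        gcongr
        · exact (hρ m).le
        · exact hbs m
        · exact hble m
      · simp [h]
    have hkey : bs i * Dq ρ bt i ≤ bt i * Dq ρ bs i := by
      rw [Dq_eq ρ bs i, Dq_eq ρ bt i]
      have hTs : 0 ≤ Tq ρ bs n := Tq_nonneg ρ bs hρ hbs n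
      have hTt : 0 ≤ Tq ρ bt n := Tq_nonneg ρ bt hρ hbt n
      have hbsi := hbs i
      have hbti := hbt i
      have hbi := hble i
      nlinarith [mul_nonneg (mul_nonneg hbsi.le hbti.le) (sub_nonneg.mpr hTle)]
    have ihn := ih (le_of_lt hnN)
    have E1 : (1 - Rq ρ n) * (Dq ρ bs i * Dq ρ bt i) * Sq ρ bt W0 (n + 1)
        = Dq ρ bs i * (ρ i * bt i * W0)
          + (1 - Rq ρ (n + 1)) * (Dq ρ bs i * Dq ρ bt i) * Sq ρ bt W0 n := by
      linear_combination Dq ρ bs i * e_t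
    have E2 : (1 - Rq ρ n) * (Dq ρ bs i * Dq ρ bt i) * Sq ρ bs W0 (n + 1)
        = Dq ρ bt i * (ρ i * bs i * W0)
          + (1 - Rq ρ (n + 1)) * (Dq ρ bs i * Dq ρ bt i) * Sq ρ bs W0 n := by
      linear_combination Dq ρ bt i * e_s
    have t1 : Dq ρ bt i * (ρ i * bs i * W0) ≤ Dq ρ bs i * (ρ i * bt i * W0) := by
      have h0 : 0 ≤ ρ i * W0 := mul_nonneg (hρ i).le hW0
      nlinarith [mul_le_mul_of_nonneg_left hkey h0]
    have t2 : (1 - Rq ρ (n + 1)) * (Dq ρ bs i * Dq ρ bt i) * Sq ρ bs W0 n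
        ≤ (1 - Rq ρ (n + 1)) * (Dq ρ bs i * Dq ρ bt i) * Sq ρ bt W0 n := by
      apply mul_le_mul_of_nonneg_left ihn
      positivity
    have hmul : (1 - Rq ρ n) * (Dq ρ bs i * Dq ρ bt i) * Sq ρ bs W0 (n + 1)
        ≤ (1 - Rq ρ n) * (Dq ρ bs i * Dq ρ bt i) * Sq ρ bt W0 (n + 1) := by
      rw [E1, E2]
      exact add_le_add t1 t2
    have hpos : 0 < (1 - Rq ρ n) * (Dq ρ bs i * Dq ρ bt i) := by positivity
    exact le_of_mul_le_mul_left hmul hpos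

end APQAux

/-- For `j < i`, perturbing the `j`-th coordinate of a strictly ordered positive
bid profile within the interval `(b_{j-1}, b_{j+1})` (with `b_0 := 0`), the
quantity `W̃_i`, recomputed from the perturbed profile, is monotone decreasing
in the perturbed bid. Membership of `s ≤ t` in the interval is expressed by
`0 < s`, `b l < s` for all `l < j`, and `t < b l` for all `l > j`. -/
theorem tildeW_antitone_in_lower_bid (N : ℕ) (hN : 1 ≤ N)
    (ρ b C : Fin N → ℝ) (W0 : ℝ) (i j : Fin N) (hji : j < i)
    (hρ : ∀ k, 0 < ρ k) (hρsum : ∑ k, ρ k < 1) (hW0 : 0 < W0)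
    (hbpos : ∀ k, 0 < b k) (hbmono : StrictMono b) (hC : ∀ k, 0 < C k) :
    ∀ s t : ℝ, 0 < s → (∀ l : Fin N, l < j → b l < s) →
      (∀ l : Fin N, j < l → t < b l) → s ≤ t →
      tildeW ρ (Function.update b j t) C W0 i ≤
        tildeW ρ (Function.update b j s) C W0 i := by
  intro s t hs _ _ hst
  set bs := Function.update b j s with hbsdef
  set bt := Function.update b j t with hbtdef
  have hij : i ≠ j := ne_of_gt hji
  have hbsp : ∀ k, 0 < bs k := by
    intro k
    by_cases h : k = j
    · subst h; simpa [hbsdef] using hs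
    · simpa [hbsdef, Function.update_of_ne h] using hbpos k
  have hble : ∀ k, bs k ≤ bt k := by
    intro k
    by_cases h : k = j
    · subst h; simpa [hbsdef, hbtdef] using hst
    · simp [hbsdef, hbtdef, Function.update_of_ne h]
  have hbtp : ∀ k, 0 < bt k := fun k => lt_of_lt_of_le (hbsp k) (hble k)
  -- the perturbed bids agree with the original ones at indices ≥ i
  have hup : ∀ k : Fin N, i ≤ k → bs k = b k ∧ bt k = b k := by
    intro k hk
    have hkj : k ≠ j := ne_of_gt (lt_of_lt_of_le hji hk)
    exact ⟨Function.update_of_ne hkj _ _, Function.update_of_ne hkj _ _⟩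
  have hbi_s : bs i = b i := Function.update_of_ne hij _ _
  have hbi_t : bt i = b i := Function.update_of_ne hij _ _
  -- the S-sums in tildeW
  have hSs : (∑ k : Fin N, (if k < i then ρ k * bs k * classW ρ bs W0 k else 0))
      = APQAux.Sq ρ bs W0 (i : ℕ) := by
    unfold APQAux.Sq
    apply Finset.sum_congr rfl
    intro k _
    congr 1
  have hSt : (∑ k : Fin N, (if k < i then ρ k * bt k * classW ρ bt W0 k else 0))
      = APQAux.Sq ρ bt W0 (i : ℕ) := by
    unfold APQAux.Sq
    apply Finset.sum_congr rfl
    intro k _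
    congr 1
  have hScmp := APQAux.Scmp ρ bs bt W0 hρ hρsum hW0.le hbsp hble (i : ℕ) (le_of_lt i.isLt)
  -- the other pieces of tildeW agree for the two profiles
  have hnum_s : (∑ k : Fin N, (if i ≤ k then ρ k * (1 - bs i / bs k) else 0))
      = ∑ k : Fin N, (if i ≤ k then ρ k * (1 - b i / b k) else 0) := by
    apply Finset.sum_congr rfl
    intro k _
    by_cases h : i ≤ k
    · rw [if_pos h, if_pos h, hbi_s, (hup k h).1]
    · rw [if_neg h, if_neg h]
  have hnum_t : (∑ k : Fin N, (if i ≤ k then ρ k * (1 - bt i / bt k) else 0))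
      = ∑ k : Fin N, (if i ≤ k then ρ k * (1 - b i / b k) else 0) := by
    apply Finset.sum_congr rfl
    intro k _
    by_cases h : i ≤ k
    · rw [if_pos h, if_pos h, hbi_t, (hup k h).2]
    · rw [if_neg h, if_neg h]
  have hden_s : (∑ k : Fin N, (if i ≤ k then ρ k / bs k else 0))
      = ∑ k : Fin N, (if i ≤ k then ρ k / b k else 0) := by
    apply Finset.sum_congr rfl
    intro k _
    by_cases h : i ≤ k
    · rw [if_pos h, if_pos h, (hup k h).1]
    · rw [if_neg h, if_neg h]
  have hden_t : (∑ k : Fin N, (if i ≤ k then ρ k / bt k else 0))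
      = ∑ k : Fin N, (if i ≤ k then ρ k / b k else 0) := by
    apply Finset.sum_congr rfl
    intro k _
    by_cases h : i ≤ k
    · rw [if_pos h, if_pos h, (hup k h).2]
    · rw [if_neg h, if_neg h]
  have hdenpos : 0 < ∑ k : Fin N, (if i ≤ k then ρ k / b k else 0) := by
    apply Finset.sum_pos'
    · intro k _
      by_cases h : i ≤ k
      · simp only [h, if_pos]
        exact div_nonneg (hρ k).le (hbpos k).le
      · simp [h]
    · refine ⟨i, Finset.mem_univ i, ?_⟩
      simp only [le_refl, if_pos]
      exact div_pos (hρ i) (hbpos i)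
  unfold tildeW
  rw [hSs, hSt, hnum_s, hnum_t, hden_s, hden_t, hbi_s, hbi_t]
  have hD : 0 < C i * ∑ k : Fin N, (if i ≤ k then ρ k / b k else 0) :=
    mul_pos (hC i) hdenpos
  have hc : 0 ≤ C i / (b i) ^ 2 := div_nonneg (hC i).le (sq_nonneg (b i))
  have hnum : 1 - (∑ k : Fin N, (if i ≤ k then ρ k * (1 - b i / b k) else 0))
        - C i / (b i) ^ 2 * APQAux.Sq ρ bt W0 (i : ℕ)
      ≤ 1 - (∑ k : Fin N, (if i ≤ k then ρ k * (1 - b i / b k) else 0))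
        - C i / (b i) ^ 2 * APQAux.Sq ρ bs W0 (i : ℕ) := by
    have h := mul_le_mul_of_nonneg_left hScmp hc
    linarith
  exact (div_le_div_iff_of_pos_right hD).mpr hnum
end

section
/- Fix i ∈ {1,…,N} and fix the coordinates b_j for all j ≠ i of a strictly ordered bid profile. Then the map t ↦ W_i evaluated at the profile with b_i replaced by t, with all waiting times W_k recomputed from the perturbed profile, is monotone decreasing in t on the interval (b_{i−1}, b_{i+1}), where b_0 := 0 and b_{N+1} := ∞. -/
/-!
Multiplying the recursion by its denominator `D_j` turns it into the lower-triangular system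
`D_j W_j + Σ_{l<j} ρ_l (1 − c_l/c_j) W_l = r_j`. For positive nondecreasing bids `c` and a
nonnegative nondecreasing right-hand side `r` its solution is nonnegative with `c_j W_j`
nondecreasing: comparing consecutive rows expresses `D_{j+1} (z_{j+1} − z_j)`, `z = c W`, through
`r_{j+1} − r_j`, `c_{j+1} − c_j` and the nonnegative slack `(1 − Σρ) z_j + Σ_{l<j} ρ_l (z_j − z_l)`.

Raising `b_i` from `s` to `t` leaves the coefficients of the rows `j < i` unchanged and lowers their
denominators by `c_j δ` with `δ ≥ 0`, so the differences `W_j(t) − W_j(s)`, `j < i`, solve the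
same system with right-hand side `δ c_j W_j(s)` and are nonnegative. In row `i` itself the
denominator grows with the bid while the subtracted lower-class terms grow as well.
-/

open Finset Function

section FinSums

variable {N : ℕ} {M : Type*} [AddCommMonoid M]

theorem Fin.sum_ite_lt_of_val_eq_succ (f : Fin N → M) {j j' : Fin N} (h : (j' : ℕ) = j + 1) :
    ∑ l, (if l < j' then f l else 0) = (∑ l, if l < j then f l else 0) + f j := by
  have split (l : Fin N) :
      (if l < j' then f l else 0) = (if l < j then f l else 0) + if j = l then f l else 0 := by
    simp only [Fin.lt_def, Fin.ext_iff]
    split_ifs <;> first | omega | simp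
  rw [sum_congr rfl fun l _ => split l, sum_add_distrib, sum_ite_eq]
  simp

theorem Fin.sum_ite_le_of_val_eq_succ (f : Fin N → M) {j j' : Fin N} (h : (j' : ℕ) = j + 1) :
    ∑ k, (if j ≤ k then f k else 0) = (∑ k, if j' ≤ k then f k else 0) + f j := by
  have split (k : Fin N) :
      (if j ≤ k then f k else 0) = (if j' ≤ k then f k else 0) + if j = k then f k else 0 := by
    simp only [Fin.le_def, Fin.ext_iff]
    split_ifs <;> first | omega | simp
  rw [sum_congr rfl fun k _ => split k, sum_add_distrib, sum_ite_eq]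
  simp

theorem sum_ite_lt_add_sum_ite_le {ι : Type*} [Fintype ι] [LinearOrder ι] (f : ι → M) (j : ι) :
    (∑ l, if l < j then f l else 0) + ∑ l, (if j ≤ l then f l else 0) = ∑ l, f l := by
  rw [← sum_add_distrib]
  refine sum_congr rfl fun l _ => ?_
  rcases lt_or_ge l j with h | h
  · simp [h, h.not_ge]
  · simp [h, h.not_gt]

end FinSums

theorem StrictMono.update_of_lt_of_gt {α β : Type*} [LinearOrder α] [DecidableEq α] [Preorder β]
    {f : α → β} (hf : StrictMono f) {i : α} {x : β} (hlt : ∀ j < i, f j < x)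
    (hgt : ∀ j, i < j → x < f j) : StrictMono (update f i x) := by
  intro a a' h
  rcases eq_or_ne a i with rfl | ha
  · simpa [h.ne'] using hgt a' h
  rcases eq_or_ne a' i with rfl | ha'
  · simpa [ha] using hlt a h
  simpa [ha, ha'] using hf h

theorem update_pos {α β : Type*} [DecidableEq α] [Zero β] [LT β] {f : α → β}
    (hf : ∀ a, 0 < f a) {i : α} {x : β} (hx : 0 < x) : ∀ a, 0 < update f i x a :=
  (forall_update_iff f fun _ y => 0 < y).2 ⟨hx, fun a _ => hf a⟩

section Waiting

variable {N : ℕ} (ρ c : Fin N → ℝ)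

noncomputable def waitDenom (j : Fin N) : ℝ :=
  1 - ∑ k, if j ≤ k then ρ k * (1 - c j / c k) else 0

theorem waitDenom_eq (j : Fin N) :
    waitDenom ρ c j =
      (1 - ∑ k, if j ≤ k then ρ k else 0) + c j * ∑ k, if j ≤ k then ρ k / c k else 0 := by
  have split (k : Fin N) : (if j ≤ k then ρ k * (1 - c j / c k) else 0) =
      (if j ≤ k then ρ k else 0) - c j * if j ≤ k then ρ k / c k else 0 := by
    split_ifs <;> ring
  rw [waitDenom, sum_congr rfl fun k _ => split k, sum_sub_distrib, ← mul_sum]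
  ring

variable {ρ c}

theorem sum_ite_le_lt_one (hρ : ∀ k, 0 ≤ ρ k) (hsum : ∑ k, ρ k < 1) (j : Fin N) :
    ∑ k, (if j ≤ k then ρ k else 0) < 1 := by
  have hhead : 0 ≤ ∑ l, if l < j then ρ l else 0 :=
    sum_nonneg fun l _ => by split_ifs <;> simp [hρ l]
  linarith [sum_ite_lt_add_sum_ite_le ρ j]

theorem waitDenom_pos (hρ : ∀ k, 0 ≤ ρ k) (hsum : ∑ k, ρ k < 1) (hc : ∀ k, 0 < c k)
    (j : Fin N) : 0 < waitDenom ρ c j := by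
  have hσ : 0 ≤ ∑ k, if j ≤ k then ρ k / c k else 0 :=
    sum_nonneg fun k _ => by split_ifs <;> simp [div_nonneg (hρ k) (hc k).le]
  rw [waitDenom_eq]
  linarith [sum_ite_le_lt_one hρ hsum j, mul_nonneg (hc j).le hσ]

variable (ρ c)

def SolvesRowsBelow (r w : Fin N → ℝ) (m : ℕ) : Prop :=
  ∀ j : Fin N, (j : ℕ) < m →
    waitDenom ρ c j * w j = r j - ∑ l, if l < j then ρ l * (1 - c l / c j) * w l else 0

/-- Equals `(1 - Σ ρ) z_j + Σ_{l<j} ρ_l (z_j - z_l)` for `z = c * w`. -/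
noncomputable def rowSlack (w : Fin N → ℝ) (j : Fin N) : ℝ :=
  (1 - ∑ k, if j ≤ k then ρ k else 0) * (c j * w j) - ∑ l, if l < j then ρ l * (c l * w l) else 0

theorem rowSlack_of_val_eq_succ (w : Fin N → ℝ) {j j' : Fin N} (h : (j' : ℕ) = j + 1) :
    rowSlack ρ c w j' =
      rowSlack ρ c w j + (1 - ∑ k, if j' ≤ k then ρ k else 0) * (c j' * w j' - c j * w j) := by
  rw [rowSlack, rowSlack, Fin.sum_ite_lt_of_val_eq_succ _ h, Fin.sum_ite_le_of_val_eq_succ _ h]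
  ring

variable {ρ c}

theorem rowSlack_nonneg (hρ : ∀ k, 0 ≤ ρ k) (hsum : ∑ k, ρ k < 1) {w : Fin N → ℝ} {j : Fin N}
    (hj : 0 ≤ c j * w j) (hlt : ∀ l < j, c l * w l ≤ c j * w j) : 0 ≤ rowSlack ρ c w j := by
  have hhead : (∑ l, if l < j then ρ l * (c l * w l) else 0) ≤
      (∑ l, if l < j then ρ l else 0) * (c j * w j) := by
    rw [sum_mul]
    refine sum_le_sum fun l _ => ?_
    split_ifs with hl
    · exact mul_le_mul_of_nonneg_left (hlt l hl) (hρ l)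
    · simp
  have htotal : 0 ≤ (1 - ∑ k, ρ k) * (c j * w j) := mul_nonneg (by linarith) hj
  rw [rowSlack]
  linear_combination hhead + htotal + (c j * w j) * sum_ite_lt_add_sum_ite_le ρ j

theorem SolvesRowsBelow.rowSlack_eq {r w : Fin N → ℝ} {m : ℕ} (hw : SolvesRowsBelow ρ c r w m)
    (hc : ∀ k, 0 < c k) {j : Fin N} (hj : (j : ℕ) < m) :
    rowSlack ρ c w j = c j * (r j - (∑ l, if l < j then ρ l * w l else 0)
      - (∑ k, if j ≤ k then ρ k / c k else 0) * (c j * w j)) := by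
  have hlower : c j * (∑ l, if l < j then ρ l * (1 - c l / c j) * w l else 0) =
      c j * (∑ l, if l < j then ρ l * w l else 0) - ∑ l, if l < j then ρ l * (c l * w l) else 0 := by
    rw [mul_sum, mul_sum, ← sum_sub_distrib]
    refine sum_congr rfl fun l _ => ?_
    split_ifs
    · field_simp [(hc j).ne']
    · simp
  rw [rowSlack]
  linear_combination c j * hw j hj - hlower - (c j * w j) * waitDenom_eq ρ c j

theorem SolvesRowsBelow.mul_sub_eq {r w : Fin N → ℝ} {m : ℕ} (hw : SolvesRowsBelow ρ c r w m)
    (hc : ∀ k, 0 < c k) {j j' : Fin N} (h : (j' : ℕ) = j + 1) (hj' : (j' : ℕ) < m) :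
    c j * waitDenom ρ c j' * (c j' * w j' - c j * w j) =
      (c j' - c j) * rowSlack ρ c w j + c j * c j' * (r j' - r j) := by
  have hσ : c j * (ρ j / c j) = ρ j := mul_div_cancel₀ _ (hc j).ne'
  have hE := hw.rowSlack_eq hc (j := j) (by omega)
  have hE' := hw.rowSlack_eq hc hj'
  linear_combination (c j * (c j' * w j' - c j * w j)) * waitDenom_eq ρ c j'
    - c j * rowSlack_of_val_eq_succ ρ c w h + c j * hE' - c j' * hE
    - c j * c j' * Fin.sum_ite_lt_of_val_eq_succ (fun l => ρ l * w l) h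
    + c j * c j' * (c j * w j) * Fin.sum_ite_le_of_val_eq_succ (fun k => ρ k / c k) h
    + c j * c j' * w j * hσ

theorem SolvesRowsBelow.nonneg_and_monotone {r w : Fin N → ℝ} {m : ℕ}
    (hw : SolvesRowsBelow ρ c r w m) (hρ : ∀ k, 0 ≤ ρ k) (hsum : ∑ k, ρ k < 1)
    (hc : ∀ k, 0 < c k) (hcm : Monotone c) (hr : ∀ j : Fin N, (j : ℕ) < m → 0 ≤ r j)
    (hrm : ∀ j k : Fin N, j ≤ k → (k : ℕ) < m → r j ≤ r k) :
    ∀ j : Fin N, (j : ℕ) < m → 0 ≤ w j ∧ ∀ l ≤ j, c l * w l ≤ c j * w j := by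
  rintro ⟨n, hn⟩ hnm
  induction n with
  | zero =>
    have hrow := hw ⟨0, hn⟩ hnm
    rw [sum_eq_zero fun l _ => if_neg (show ¬l < (⟨0, hn⟩ : Fin N) from Nat.not_lt_zero l)] at hrow
    refine ⟨nonneg_of_mul_nonneg_right ?_ (waitDenom_pos hρ hsum hc ⟨0, hn⟩), fun l hl => ?_⟩
    · simpa [hrow] using hr _ hnm
    · rw [show l = ⟨0, hn⟩ from Fin.ext (Nat.le_zero.1 hl)]
  | succ n ih =>
    obtain ⟨hwj, hmono⟩ := ih (by omega) (Nat.lt_of_succ_lt hnm)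
    set j : Fin N := ⟨n, by omega⟩
    set j' : Fin N := ⟨n + 1, hn⟩
    have hslack := rowSlack_nonneg hρ hsum (mul_nonneg (hc j).le hwj) fun l hl => hmono l hl.le
    have hjj' : j ≤ j' := Fin.mk_le_mk.2 n.le_succ
    have hstep : c j * w j ≤ c j' * w j' := by
      have hpos : 0 < c j * waitDenom ρ c j' := mul_pos (hc j) (waitDenom_pos hρ hsum hc j')
      refine sub_nonneg.1 (nonneg_of_mul_nonneg_right ?_ hpos)
      rw [hw.mul_sub_eq hc rfl hnm]
      exact add_nonneg (mul_nonneg (sub_nonneg.2 (hcm hjj')) hslack)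
        (mul_nonneg (mul_pos (hc j) (hc j')).le (sub_nonneg.2 (hrm j j' hjj' hnm)))
    refine ⟨nonneg_of_mul_nonneg_right ((mul_nonneg (hc j).le hwj).trans hstep) (hc j'), ?_⟩
    intro l hl
    obtain hlt | rfl := hl.lt_or_eq
    · exact (hmono l (Nat.lt_succ_iff.1 hlt)).trans hstep
    · rfl

theorem classW_solvesRowsBelow (hρ : ∀ k, 0 ≤ ρ k) (hsum : ∑ k, ρ k < 1) (hc : ∀ k, 0 < c k)
    (W0 : ℝ) : SolvesRowsBelow ρ c (fun _ => W0 / (1 - ∑ k, ρ k)) (classW ρ c W0) N := by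
  intro j _
  have hD := (waitDenom_pos hρ hsum hc j).ne'
  rw [waitDenom] at hD ⊢
  rw [classW]
  simp only [dite_eq_ite]
  exact mul_div_cancel₀ _ hD

variable {W0 : ℝ}

theorem classW_nonneg (hρ : ∀ k, 0 ≤ ρ k) (hsum : ∑ k, ρ k < 1) (hW0 : 0 ≤ W0)
    (hc : ∀ k, 0 < c k) (hcm : Monotone c) (j : Fin N) : 0 ≤ classW ρ c W0 j :=
  ((classW_solvesRowsBelow hρ hsum hc W0).nonneg_and_monotone hρ hsum hc hcm
    (fun _ _ => div_nonneg hW0 (by linarith)) (fun _ _ _ _ => le_rfl) j j.isLt).1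

theorem monotone_mul_classW (hρ : ∀ k, 0 ≤ ρ k) (hsum : ∑ k, ρ k < 1) (hW0 : 0 ≤ W0)
    (hc : ∀ k, 0 < c k) (hcm : Monotone c) : Monotone fun j => c j * classW ρ c W0 j :=
  fun l j hlj => ((classW_solvesRowsBelow hρ hsum hc W0).nonneg_and_monotone hρ hsum hc hcm
    (fun _ _ => div_nonneg hW0 (by linarith)) (fun _ _ _ _ => le_rfl) j j.isLt).2 l hlj

variable {c' : Fin N → ℝ} {i : Fin N}

theorem waitDenom_eq_add_of_eq_below (heq : ∀ k < i, c k = c' k) {j : Fin N} (hj : j < i) :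
    waitDenom ρ c j = waitDenom ρ c' j + c j * ∑ k, ρ k * (1 / c k - 1 / c' k) := by
  have split (k : Fin N) : (if j ≤ k then ρ k * (1 - c' j / c' k) else 0) =
      (if j ≤ k then ρ k * (1 - c j / c k) else 0) + c j * (ρ k * (1 / c k - 1 / c' k)) := by
    split_ifs with hjk
    · rw [← heq j hj]
      ring
    · rw [heq k ((not_le.1 hjk).trans hj)]
      ring
  rw [waitDenom, waitDenom, sum_congr rfl fun k _ => split k, sum_add_distrib, mul_sum]
  ring

/-- Below `i` the two profiles have the same triangular coefficients; only the denominators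
differ. -/
theorem solvesRowsBelow_classW_sub (hρ : ∀ k, 0 ≤ ρ k) (hsum : ∑ k, ρ k < 1)
    (hc : ∀ k, 0 < c k) (hc' : ∀ k, 0 < c' k) (heq : ∀ k < i, c k = c' k) :
    SolvesRowsBelow ρ c' (fun j => (∑ k, ρ k * (1 / c k - 1 / c' k)) * (c j * classW ρ c W0 j))
      (fun j => classW ρ c' W0 j - classW ρ c W0 j) i := by
  intro j hj
  replace hj : j < i := hj
  have hsplit : (∑ l, if l < j then ρ l * (1 - c' l / c' j) *
        (classW ρ c' W0 l - classW ρ c W0 l) else 0) =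
      (∑ l, if l < j then ρ l * (1 - c' l / c' j) * classW ρ c' W0 l else 0) -
        ∑ l, if l < j then ρ l * (1 - c l / c j) * classW ρ c W0 l else 0 := by
    rw [← sum_sub_distrib]
    refine sum_congr rfl fun l _ => ?_
    split_ifs with hl
    · rw [heq l (hl.trans hj), heq j hj]
      ring
    · simp
  linear_combination classW_solvesRowsBelow hρ hsum hc' W0 j j.isLt
    - classW_solvesRowsBelow hρ hsum hc W0 j j.isLt + hsplit
    + classW ρ c W0 j * waitDenom_eq_add_of_eq_below heq hj

theorem classW_le_classW_of_le (hρ : ∀ k, 0 ≤ ρ k) (hsum : ∑ k, ρ k < 1) (hW0 : 0 ≤ W0)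
    (hc : ∀ k, 0 < c k) (hcm : Monotone c) (hc'm : Monotone c') (hle : c ≤ c')
    (heq : ∀ k < i, c k = c' k) {l : Fin N} (hl : l < i) :
    classW ρ c W0 l ≤ classW ρ c' W0 l := by
  have hc' k : 0 < c' k := (hc k).trans_le (hle k)
  have hδ : 0 ≤ ∑ k, ρ k * (1 / c k - 1 / c' k) := sum_nonneg fun k _ =>
    mul_nonneg (hρ k) (sub_nonneg.2 (one_div_le_one_div_of_le (hc k) (hle k)))
  have hdiff := (solvesRowsBelow_classW_sub (W0 := W0) hρ hsum hc hc' heq).nonneg_and_monotone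
    hρ hsum hc' hc'm
    (fun j _ => mul_nonneg hδ (mul_nonneg (hc j).le (classW_nonneg hρ hsum hW0 hc hcm j)))
    (fun j k hjk _ => mul_le_mul_of_nonneg_left (monotone_mul_classW hρ hsum hW0 hc hcm hjk) hδ)
    l hl
  exact sub_nonneg.1 hdiff.1

variable {b : Fin N → ℝ} {s t : ℝ}

theorem waitDenom_update_self_le (hρ : ∀ k, 0 ≤ ρ k) (hb : ∀ k, 0 < b k) (hs : 0 < s)
    (hst : s ≤ t) : waitDenom ρ (update b i s) i ≤ waitDenom ρ (update b i t) i := by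
  refine sub_le_sub_left (sum_le_sum fun k _ => ?_) 1
  split_ifs with hik
  · obtain hlt | rfl := hik.lt_or_eq
    · simp only [update_self, update_of_ne hlt.ne']
      exact mul_le_mul_of_nonneg_left
        (sub_le_sub_left (div_le_div_of_nonneg_right hst (hb k).le) 1) (hρ k)
    · simp [hs.ne', (hs.trans_le hst).ne']
  · rfl

theorem classW_update_self_le (hρ : ∀ k, 0 ≤ ρ k) (hsum : ∑ k, ρ k < 1) (hW0 : 0 ≤ W0)
    (hb : ∀ k, 0 < b k) (hs : 0 < s) (hst : s ≤ t) (hlow : ∀ j < i, b j < s)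
    (hms : Monotone (update b i s)) (hmt : Monotone (update b i t))
    (hlower : ∀ l < i, classW ρ (update b i s) W0 l ≤ classW ρ (update b i t) W0 l) :
    classW ρ (update b i t) W0 i ≤ classW ρ (update b i s) W0 i := by
  have ht : 0 < t := hs.trans_le hst
  have hcs : ∀ k, 0 < update b i s k := update_pos hb hs
  have hct : ∀ k, 0 < update b i t k := update_pos hb ht
  have hlower_terms : (∑ l, if l < i then ρ l * (1 - update b i s l / update b i s i) *
        classW ρ (update b i s) W0 l else 0) ≤
      ∑ l, if l < i then ρ l * (1 - update b i t l / update b i t i) *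
        classW ρ (update b i t) W0 l else 0 := by
    refine sum_le_sum fun l _ => ?_
    split_ifs with hl
    · simp only [update_self, update_of_ne hl.ne]
      have hcoef : 0 ≤ 1 - b l / t := sub_nonneg.2 ((div_le_one ht).2 ((hlow l hl).le.trans hst))
      exact mul_le_mul (mul_le_mul_of_nonneg_left
          (sub_le_sub_left (div_le_div_of_nonneg_left (hb l).le hs hst) 1) (hρ l))
        (hlower l hl) (classW_nonneg hρ hsum hW0 hcs hms l) (mul_nonneg (hρ l) hcoef)
    · rfl
  refine le_of_mul_le_mul_left ?_ (waitDenom_pos hρ hsum hcs i)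
  calc waitDenom ρ (update b i s) i * classW ρ (update b i t) W0 i
      ≤ waitDenom ρ (update b i t) i * classW ρ (update b i t) W0 i :=
        mul_le_mul_of_nonneg_right (waitDenom_update_self_le hρ hb hs hst)
          (classW_nonneg hρ hsum hW0 hct hmt i)
    _ = W0 / (1 - ∑ k, ρ k) - _ := classW_solvesRowsBelow hρ hsum hct W0 i i.isLt
    _ ≤ W0 / (1 - ∑ k, ρ k) - _ := sub_le_sub_left hlower_terms _
    _ = waitDenom ρ (update b i s) i * classW ρ (update b i s) W0 i :=
        (classW_solvesRowsBelow hρ hsum hcs W0 i i.isLt).symm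

end Waiting

theorem classW_antitone_in_own_bid_general (N : ℕ)
    (ρ b : Fin N → ℝ) (W0 : ℝ) (i : Fin N)
    (hρ : ∀ k, 0 < ρ k) (hρsum : ∑ k, ρ k < 1) (hW0 : 0 < W0)
    (hbpos : ∀ k, 0 < b k) (hbmono : StrictMono b) :
    ∀ s t : ℝ, 0 < s → (∀ j : Fin N, j < i → b j < s) →
      (∀ j : Fin N, i < j → t < b j) → s ≤ t →
      classW ρ (Function.update b i t) W0 i ≤
        classW ρ (Function.update b i s) W0 i := by
  intro s t hs hlow hupp hst
  have hρ' k : 0 ≤ ρ k := (hρ k).le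
  have hms := (hbmono.update_of_lt_of_gt hlow fun j hj => hst.trans_lt (hupp j hj)).monotone
  have hmt := (hbmono.update_of_lt_of_gt (fun j hj => (hlow j hj).trans_le hst) hupp).monotone
  refine classW_update_self_le hρ' hρsum hW0.le hbpos hs hst hlow hms hmt fun l hl => ?_
  exact classW_le_classW_of_le hρ' hρsum hW0.le (update_pos hbpos hs) hms hmt
    (update_le_update_iff'.2 hst) (fun k hk => by simp [hk.ne]) hl

/-- Perturbing the `i`-th coordinate of a strictly ordered positive bid profile
within the interval `(b_{i-1}, b_{i+1})` (with `b_0 := 0`, `b_{N+1} := ∞`),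
the class waiting time `W_i`, recomputed from the perturbed profile, is
monotone decreasing in the perturbed bid. Membership of `s ≤ t` in the interval
is expressed by `0 < s`, `b j < s` for all `j < i`, and `t < b j` for all
`j > i`. -/
theorem classW_antitone_in_own_bid (N : ℕ) (hN : 1 ≤ N)
    (ρ b : Fin N → ℝ) (W0 : ℝ) (i : Fin N)
    (hρ : ∀ k, 0 < ρ k) (hρsum : ∑ k, ρ k < 1) (hW0 : 0 < W0)
    (hbpos : ∀ k, 0 < b k) (hbmono : StrictMono b) :
    ∀ s t : ℝ, 0 < s → (∀ j : Fin N, j < i → b j < s) →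
      (∀ j : Fin N, i < j → t < b j) → s ≤ t →
      classW ρ (Function.update b i t) W0 i ≤
        classW ρ (Function.update b i s) W0 i :=
  classW_antitone_in_own_bid_general N ρ b W0 i hρ hρsum hW0 hbpos hbmono
end

section
/- Let N ≥ 1, let C_1,…,C_N > 0 (waiting-cost rates) and x̄_1,…,x̄_N > 0 (mean service times), and let W : (0,∞) → ℝ be a differentiable function. Suppose that for each i = 1,…,N there exists b_i > 0 that is the unique minimizer over (0,∞) of the priced cost a ↦ C_i·W(a) + x̄_i·a. If π is a permutation of {1,…,N} such that C_{π(1)}/x̄_{π(1)} < C_{π(2)}/x̄_{π(2)} < ⋯ < C_{π(N)}/x̄_{π(N)}, then b_{π(1)} < b_{π(2)} < ⋯ < b_{π(N)}. -/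
/-!
Comparing the two optimality inequalities of classes `i` and `j` (each class's bid is no worse
for it than the other's) and cross-multiplying by the positive waiting costs gives
`(C_j x̄_i - C_i x̄_j)(b_i - b_j) ≤ 0`, hence `b_i ≤ b_j` when `C_i/x̄_i < C_j/x̄_j`.
Equality is ruled out by the first-order condition: a common interior minimizer `β` would
satisfy `C_i W'(β) + x̄_i = 0 = C_j W'(β) + x̄_j`, forcing `C_i/x̄_i = C_j/x̄_j`.
-/

section PricedCost

def pricedCost (W : ℝ → ℝ) (c x a : ℝ) : ℝ := c * W a + x * a

variable {W : ℝ → ℝ} {s : Set ℝ} {c c' x x' β β' : ℝ}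

theorem IsMinOn.pricedCost_le
    (hβ : IsMinOn (pricedCost W c x) s β)
    (hβ' : IsMinOn (pricedCost W c' x') s β') (hβs : β ∈ s) (hβ's : β' ∈ s)
    (hc : 0 < c) (hc' : 0 < c') (hcross : c * x' < c' * x) : β ≤ β' := by
  have h₁ : c * W β + x * β ≤ c * W β' + x * β' := hβ hβ's
  have h₂ : c' * W β' + x' * β' ≤ c' * W β + x' * β := hβ' hβs
  have key : (c' * x - c * x') * (β - β') ≤ 0 := by
    nlinarith [mul_le_mul_of_nonneg_left h₁ hc'.le, mul_le_mul_of_nonneg_left h₂ hc.le]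
  by_contra! hlt
  nlinarith [mul_pos (sub_pos.2 hcross) (sub_pos.2 hlt)]

theorem IsLocalMin.pricedCost_deriv_eq_zero (hmin : IsLocalMin (pricedCost W c x) β)
    (hW : DifferentiableAt ℝ W β) : c * deriv W β + x = 0 := by
  have hderiv := (hW.hasDerivAt.const_mul c).add ((hasDerivAt_id β).const_mul x)
  simpa [pricedCost] using hmin.hasDerivAt_eq_zero hderiv

theorem IsMinOn.pricedCost_lt
    (hβ : IsMinOn (pricedCost W c x) s β)
    (hβ' : IsMinOn (pricedCost W c' x') s β') (hs : IsOpen s)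
    (hW : DifferentiableOn ℝ W s) (hβs : β ∈ s) (hβ's : β' ∈ s)
    (hc : 0 < c) (hc' : 0 < c') (hcross : c * x' < c' * x) : β < β' := by
  refine (hβ.pricedCost_le hβ' hβs hβ's hc hc' hcross).lt_of_ne ?_
  rintro rfl
  have hWβ : DifferentiableAt ℝ W β := hW.differentiableAt (hs.mem_nhds hβs)
  have hfoc := (hβ.isLocalMin (hs.mem_nhds hβs)).pricedCost_deriv_eq_zero hWβ
  have hfoc' := (hβ'.isLocalMin (hs.mem_nhds hβs)).pricedCost_deriv_eq_zero hWβ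
  nlinarith

end PricedCost

theorem priced_equilibrium_bids_Cmu_ordered_general (N : ℕ)
    (C xbar b : Fin N → ℝ) (W : ℝ → ℝ) (π : Equiv.Perm (Fin N))
    (hCpos : ∀ i, 0 < C i) (hxpos : ∀ i, 0 < xbar i)
    (hW : DifferentiableOn ℝ W (Set.Ioi (0 : ℝ)))
    (hbpos : ∀ i, 0 < b i)
    (hmin : ∀ i : Fin N, ∀ a : ℝ, 0 < a →
      C i * W (b i) + xbar i * b i ≤ C i * W a + xbar i * a)
    (hπ : StrictMono fun k : Fin N => C (π k) / xbar (π k)) :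
    StrictMono fun k : Fin N => b (π k) := by
  intro k l hkl
  have hcross : C (π k) * xbar (π l) < C (π l) * xbar (π k) :=
    (div_lt_div_iff₀ (hxpos _) (hxpos _)).1 (hπ hkl)
  exact IsMinOn.pricedCost_lt (fun a ha => hmin _ a ha) (fun a ha => hmin _ a ha)
    isOpen_Ioi hW (hbpos _) (hbpos _) (hCpos _) (hCpos _) hcross

/-- `Cμ`-type ordering under service-time pricing: if `W : (0,∞) → ℝ` is
differentiable, the waiting costs `C_i` and mean service times `x̄_i` are
positive, for each class `i` the bid `b_i > 0` is the unique minimizer over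
`(0,∞)` of the priced cost `a ↦ C_i·W(a) + x̄_i·a`, and `π` is a permutation
with `C_{π(1)}/x̄_{π(1)} < ⋯ < C_{π(N)}/x̄_{π(N)}`, then
`b_{π(1)} < ⋯ < b_{π(N)}`. -/
theorem priced_equilibrium_bids_Cmu_ordered (N : ℕ) (hN : 1 ≤ N)
    (C xbar b : Fin N → ℝ) (W : ℝ → ℝ) (π : Equiv.Perm (Fin N))
    (hCpos : ∀ i, 0 < C i) (hxpos : ∀ i, 0 < xbar i)
    (hW : DifferentiableOn ℝ W (Set.Ioi (0 : ℝ)))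
    (hbpos : ∀ i, 0 < b i)
    (hmin : ∀ i : Fin N, ∀ a : ℝ, 0 < a →
      C i * W (b i) + xbar i * b i ≤ C i * W a + xbar i * a)
    (huniq : ∀ i : Fin N, ∀ a : ℝ, 0 < a →
      (∀ a' : ℝ, 0 < a' → C i * W a + xbar i * a ≤ C i * W a' + xbar i * a') →
      a = b i)
    (hπ : StrictMono fun k : Fin N => C (π k) / xbar (π k)) :
    StrictMono fun k : Fin N => b (π k) :=
  priced_equilibrium_bids_Cmu_ordered_general N C xbar b W π hCpos hxpos hW hbpos hmin hπ
end
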